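/- arXiv:1702.06503 — 12 statements merged into one kernel-verified Lean document; each statement's English description precedes it below -/
import Mathlib

section
/- Let G be a connected simple graph and let a, b, c, d be four vertices of G. Then δ(a,b,c,d) ≤ 2 · min_{u ≠ v ∈ {a,b,c,d}} dist(u,v), where dist denotes shortest-path distance in G. -/
/-- The four-point quantity δ(a,b,c,d): the difference between the largest and the
second-largest of the three distance sums D1, D2, D3. -/
noncomputable def delta4 {V : Type*} (G : SimpleGraph V) (a b c d : V) : ℕ :=
  let D1 := G.dist a b + G.dist c d
  let D2 := G.dist a c + G.dist b d
  let D3 := G.dist a d + G.dist b c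
  max (max D1 D2) D3 - min (min (max D1 D2) (max D2 D3)) (max D1 D3)

/-- δ(a,b,c,d) ≤ 2 · min over the six pairs of distinct positions of dist(u,v). -/
theorem delta4_le_twice_min_dist {V : Type*} (G : SimpleGraph V) (hconn : G.Connected)
    (a b c d : V) :
    delta4 G a b c d ≤
      2 * min (min (min (G.dist a b) (G.dist a c)) (min (G.dist a d) (G.dist b c)))
              (min (G.dist b d) (G.dist c d)) := by
  simp only [delta4]
  have tri : ∀ x y z : V, G.dist x z ≤ G.dist x y + G.dist y z :=
    fun x y z => hconn.dist_triangle
  have sym : ∀ x y : V, G.dist x y = G.dist y x := fun x y => SimpleGraph.dist_comm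
  have h1 := tri a c b; have h2 := tri a d b; have h3 := tri a b c; have h4 := tri a d c
  have h5 := tri a b d; have h6 := tri a c d; have h7 := tri b c a; have h8 := tri b d a
  have h9 := tri b a c; have h10 := tri b d c; have h11 := tri b a d; have h12 := tri b c d
  have h13 := tri c d a; have h14 := tri c a b; have h15 := tri c d b; have h16 := tri c a d
  have h17 := tri c b d; have h18 := tri d a b; have h19 := tri d b c; have h20 := tri d a c
  have e1 := sym b a; have e2 := sym c a; have e3 := sym d a; have e4 := sym c b
  have e5 := sym d b; have e6 := sym d c
  omega
end

section
/- Let G be a connected simple graph with diameter h whose hyperbolicity equals h, i.e., δ(G) = h. Then for every quadruple of vertices a, b, c, d of G with δ(a,b,c,d) = h, exactly two disjoint pairs among the six pairs of these four vertices are at distance h, and each of the other four pairs is at distance h/2. -/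
/-- The hyperbolicity of a graph: the maximum of δ(a,b,c,d) over all quadruples. -/
noncomputable def hyperbolicity {V : Type*} (G : SimpleGraph V) : ℕ :=
  sSup {n | ∃ a b c d, delta4 G a b c d = n}

private theorem delta4_key (h p q r s t u : ℕ)
    (b1 : p ≤ h) (b2 : q ≤ h) (b3 : r ≤ h) (b4 : s ≤ h) (b5 : t ≤ h) (b6 : u ≤ h)
    (T1 : p + q ≤ r + s + 2 * t) (T2 : p + q ≤ r + s + 2 * u)
    (T3 : p + q ≤ t + u + 2 * r) (T4 : p + q ≤ t + u + 2 * s)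
    (ho1 : t + u ≤ r + s) (ho2 : r + s ≤ p + q)
    (hq : p + q - (r + s) = h) :
    p = h ∧ q = h ∧ 2 * r = h ∧ 2 * s = h ∧ 2 * t = h ∧ 2 * u = h := by
  omega

/-- If a connected graph has diameter h and hyperbolicity h, then every quadruple
realizing δ(a,b,c,d) = h has exactly two disjoint pairs at distance h while all
the other pairs are at distance h/2. -/
theorem diam_eq_hyp_quadruple_structure {V : Type*} [Fintype V] (G : SimpleGraph V)
    (hconn : G.Connected) (h : ℕ)
    (hdiam_ub : ∀ u v : V, G.dist u v ≤ h) (hdiam_attained : ∃ u v : V, G.dist u v = h)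
    (hhyp : hyperbolicity G = h)
    (a b c d : V) (hq : delta4 G a b c d = h) :
    (G.dist a b = h ∧ G.dist c d = h ∧
      2 * G.dist a c = h ∧ 2 * G.dist b d = h ∧ 2 * G.dist a d = h ∧ 2 * G.dist b c = h) ∨
    (G.dist a c = h ∧ G.dist b d = h ∧
      2 * G.dist a b = h ∧ 2 * G.dist c d = h ∧ 2 * G.dist a d = h ∧ 2 * G.dist b c = h) ∨
    (G.dist a d = h ∧ G.dist b c = h ∧
      2 * G.dist a b = h ∧ 2 * G.dist c d = h ∧ 2 * G.dist a c = h ∧ 2 * G.dist b d = h) := by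
  have tri : ∀ x y z : V, G.dist x z ≤ G.dist x y + G.dist y z :=
    fun x y z => hconn.dist_triangle
  have cab : G.dist b a = G.dist a b := G.dist_comm
  have ccd : G.dist d c = G.dist c d := G.dist_comm
  have cac : G.dist c a = G.dist a c := G.dist_comm
  have cbd : G.dist d b = G.dist b d := G.dist_comm
  have cad : G.dist d a = G.dist a d := G.dist_comm
  have cbc : G.dist c b = G.dist b c := G.dist_comm
  have t1 := tri a c b
  have t2 := tri a d b
  have t3 := tri c a d
  have t4 := tri c b d
  have t5 := tri a b c
  have t6 := tri a d c
  have t7 := tri b a d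
  have t8 := tri b c d
  have t9 := tri a b d
  have t10 := tri a c d
  have t11 := tri b a c
  have t12 := tri b d c
  simp only [cab, ccd, cac, cbd, cad, cbc] at t1 t2 t3 t4 t5 t6 t7 t8 t9 t10 t11 t12
  have b1 := hdiam_ub a b
  have b2 := hdiam_ub c d
  have b3 := hdiam_ub a c
  have b4 := hdiam_ub b d
  have b5 := hdiam_ub a d
  have b6 := hdiam_ub b c
  simp only [delta4] at hq
  set p := G.dist a b
  set q := G.dist c d
  set r := G.dist a c
  set s := G.dist b d
  set t := G.dist a d
  set u := G.dist b c
  rcases le_total (p + q) (r + s) with h12 | h12 <;>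
    rcases le_total (r + s) (t + u) with h23 | h23 <;>
      rcases le_total (p + q) (t + u) with h13 | h13
  · -- max D3, second D2
    obtain ⟨e1, e2, e3, e4, e5, e6⟩ := delta4_key h t u r s p q b5 b6 b3 b4 b1 b2
      (by omega) (by omega) (by omega) (by omega) h12 h23 (by omega)
    exact Or.inr (Or.inr ⟨e1, e2, e5, e6, e3, e4⟩)
  · -- all equal; max D2, second D1
    obtain ⟨e1, e2, e3, e4, e5, e6⟩ := delta4_key h r s p q t u b3 b4 b1 b2 b5 b6
      (by omega) (by omega) (by omega) (by omega) h13 h12 (by omega)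
    exact Or.inr (Or.inl ⟨e1, e2, e3, e4, e5, e6⟩)
  · -- max D2, second D3
    obtain ⟨e1, e2, e3, e4, e5, e6⟩ := delta4_key h r s t u p q b3 b4 b5 b6 b1 b2
      (by omega) (by omega) (by omega) (by omega) h13 h23 (by omega)
    exact Or.inr (Or.inl ⟨e1, e2, e5, e6, e3, e4⟩)
  · -- max D2, second D1
    obtain ⟨e1, e2, e3, e4, e5, e6⟩ := delta4_key h r s p q t u b3 b4 b1 b2 b5 b6
      (by omega) (by omega) (by omega) (by omega) h13 h12 (by omega)
    exact Or.inr (Or.inl ⟨e1, e2, e3, e4, e5, e6⟩)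
  · -- max D3, second D1
    obtain ⟨e1, e2, e3, e4, e5, e6⟩ := delta4_key h t u p q r s b5 b6 b1 b2 b3 b4
      (by omega) (by omega) (by omega) (by omega) h12 h13 (by omega)
    exact Or.inr (Or.inr ⟨e1, e2, e3, e4, e5, e6⟩)
  · -- max D1, second D3
    obtain ⟨e1, e2, e3, e4, e5, e6⟩ := delta4_key h p q t u r s b1 b2 b5 b6 b3 b4
      (by omega) (by omega) (by omega) (by omega) h23 h13 (by omega)
    exact Or.inl ⟨e1, e2, e5, e6, e3, e4⟩
  · -- max D1, second D2
    obtain ⟨e1, e2, e3, e4, e5, e6⟩ := delta4_key h p q r s t u b1 b2 b3 b4 b5 b6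
      (by omega) (by omega) (by omega) (by omega) h23 h12 (by omega)
    exact Or.inl ⟨e1, e2, e3, e4, e5, e6⟩
  · -- max D1, second D2
    obtain ⟨e1, e2, e3, e4, e5, e6⟩ := delta4_key h p q r s t u b1 b2 b3 b4 b5 b6
      (by omega) (by omega) (by omega) (by omega) h23 h12 (by omega)
    exact Or.inl ⟨e1, e2, e3, e4, e5, e6⟩
end

section
/- Let G = (V,E) be a connected simple graph with |V| > 4 and let v ∈ V be a cut vertex (1-separator) of G. Let A_1, …, A_ℓ be the connected components of G − {v}. Then there exists an index i ∈ [ℓ] such that δ(G) = δ(G − V(A_i)), where G − V(A_i) denotes the graph obtained from G by deleting all vertices of A_i. -/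
open SimpleGraph

section Aux

set_option linter.unusedSectionVars false

variable {V : Type*} {G : SimpleGraph V}

/-- Transfer a walk whose support lies in `S` to the induced subgraph. -/
lemma walk_induce {S : Set V} :
    ∀ {x y : V} (p : G.Walk x y) (hx : x ∈ S) (hy : y ∈ S)
      (_ : ∀ z ∈ p.support, z ∈ S),
      ∃ q : (G.induce S).Walk ⟨x, hx⟩ ⟨y, hy⟩, q.length = p.length := by
  intro x y p
  induction p with
  | nil =>
    intro hx hy _
    exact ⟨SimpleGraph.Walk.nil, rfl⟩
  | @cons x b y h p ih =>
    intro hx hy hp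
    have hb : b ∈ S := hp b (by simp [SimpleGraph.Walk.support_cons])
    obtain ⟨q, hq⟩ := ih hb hy (fun z hz => hp z (by simp [SimpleGraph.Walk.support_cons, hz]))
    have hadj : (G.induce S).Adj ⟨x, hx⟩ ⟨b, hb⟩ := by simpa using h
    exact ⟨SimpleGraph.Walk.cons hadj q, by simp [hq]⟩

/-- Four-point quantities agree between `G` and an induced subgraph in which distances agree. -/
lemma delta4_induce_eq {S : Set V} (a b c d : ↥S)
    (hdist : ∀ x y : ↥S, (G.induce S).dist x y = G.dist (x : V) (y : V)) :
    delta4 (G.induce S) a b c d = delta4 G (a : V) (b : V) (c : V) (d : V) := by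
  simp only [delta4, hdist]

lemma delta4_swap12 (G : SimpleGraph V) (a b c d : V) :
    delta4 G a b c d = delta4 G b a c d := by
  have e1 : G.dist b a = G.dist a b := SimpleGraph.dist_comm
  have e2 : G.dist b c = G.dist c b := SimpleGraph.dist_comm
  have e3 : G.dist b d = G.dist d b := SimpleGraph.dist_comm
  have e4 : G.dist a d = G.dist d a := SimpleGraph.dist_comm
  have e5 : G.dist a c = G.dist c a := SimpleGraph.dist_comm
  simp only [delta4]
  omega

lemma delta4_swap23 (G : SimpleGraph V) (a b c d : V) :
    delta4 G a b c d = delta4 G a c b d := by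
  have e1 : G.dist c b = G.dist b c := SimpleGraph.dist_comm
  have e2 : G.dist c d = G.dist d c := SimpleGraph.dist_comm
  have e3 : G.dist b d = G.dist d b := SimpleGraph.dist_comm
  simp only [delta4]
  omega

lemma delta4_swap24 (G : SimpleGraph V) (a b c d : V) :
    delta4 G a b c d = delta4 G a d c b := by
  have e1 : G.dist d c = G.dist c d := SimpleGraph.dist_comm
  have e2 : G.dist d b = G.dist b d := SimpleGraph.dist_comm
  have e3 : G.dist c b = G.dist b c := SimpleGraph.dist_comm
  simp only [delta4]
  omega

lemma delta4_swap34 (G : SimpleGraph V) (a b c d : V) :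
    delta4 G a b c d = delta4 G a b d c := by
  have e1 : G.dist d c = G.dist c d := SimpleGraph.dist_comm
  have e2 : G.dist a d = G.dist d a := SimpleGraph.dist_comm
  have e3 : G.dist b d = G.dist d b := SimpleGraph.dist_comm
  have e4 : G.dist a c = G.dist c a := SimpleGraph.dist_comm
  have e5 : G.dist b c = G.dist c b := SimpleGraph.dist_comm
  simp only [delta4]
  omega


lemma delta4_swap13 (G : SimpleGraph V) (a b c d : V) :
    delta4 G a b c d = delta4 G c b a d := by
  have e1 : G.dist c b = G.dist b c := SimpleGraph.dist_comm
  have e2 : G.dist c a = G.dist a c := SimpleGraph.dist_comm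
  have e3 : G.dist b a = G.dist a b := SimpleGraph.dist_comm
  simp only [delta4]
  omega

lemma delta4_swap14 (G : SimpleGraph V) (a b c d : V) :
    delta4 G a b c d = delta4 G d b c a := by
  have e1 : G.dist d b = G.dist b d := SimpleGraph.dist_comm
  have e2 : G.dist c a = G.dist a c := SimpleGraph.dist_comm
  have e3 : G.dist d c = G.dist c d := SimpleGraph.dist_comm
  have e4 : G.dist b a = G.dist a b := SimpleGraph.dist_comm
  have e5 : G.dist d a = G.dist a d := SimpleGraph.dist_comm
  simp only [delta4]
  omega

lemma delta4_self (G : SimpleGraph V) (x : V) : delta4 G x x x x = 0 := by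
  simp [delta4]

/-- The basic spec for `hyperbolicity` on a finite nonempty vertex type. -/
lemma hyperbolicity_spec (G : SimpleGraph V) [Finite V] [Nonempty V] :
    (∃ a b c d, delta4 G a b c d = hyperbolicity G) ∧
      ∀ a b c d, delta4 G a b c d ≤ hyperbolicity G := by
  have hset : {n | ∃ a b c d, delta4 G a b c d = n} =
      Set.range (fun p : V × V × V × V => delta4 G p.1 p.2.1 p.2.2.1 p.2.2.2) := by
    ext n
    constructor
    · rintro ⟨a, b, c, d, h⟩; exact ⟨⟨a, b, c, d⟩, h⟩
    · rintro ⟨⟨a, b, c, d⟩, h⟩; exact ⟨a, b, c, d, h⟩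
  have hfin : {n | ∃ a b c d, delta4 G a b c d = n}.Finite := by
    rw [hset]; exact Set.finite_range _
  obtain ⟨x⟩ := ‹Nonempty V›
  have hne : {n | ∃ a b c d, delta4 G a b c d = n}.Nonempty :=
    ⟨delta4 G x x x x, x, x, x, x, rfl⟩
  have hbdd : BddAbove {n | ∃ a b c d, delta4 G a b c d = n} := hfin.bddAbove
  exact ⟨Nat.sSup_mem hne hbdd, fun a b c d => le_csSup hbdd ⟨a, b, c, d, rfl⟩⟩

end Aux

section Main

set_option linter.unusedSectionVars false

variable {V : Type*} [Fintype V] (G : SimpleGraph V) (v : V)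

/-- `Sc G v c` : vertices outside the component `c` of `G - v` (with `v` itself included). -/
def Sc (c : (G.induce {w : V | w ≠ v}).ConnectedComponent) : Set V :=
  {u : V | ∀ hu : u ≠ v,
    (G.induce {w : V | w ≠ v}).connectedComponentMk ⟨u, hu⟩ ≠ c}

variable {G v}

lemma v_mem_Sc (c : (G.induce {w : V | w ≠ v}).ConnectedComponent) : v ∈ Sc G v c :=
  fun hu => absurd rfl hu

lemma not_mem_Sc {c : (G.induce {w : V | w ≠ v}).ConnectedComponent} {u : V} :
    u ∉ Sc G v c ↔ ∃ hu : u ≠ v,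
      (G.induce {w : V | w ≠ v}).connectedComponentMk ⟨u, hu⟩ = c := by
  simp [Sc]

lemma mem_Sc_of_ne {c c' : (G.induce {w : V | w ≠ v}).ConnectedComponent} {u : V}
    (hu : u ≠ v) (hc : (G.induce {w : V | w ≠ v}).connectedComponentMk ⟨u, hu⟩ = c)
    (hne : c ≠ c') : u ∈ Sc G v c' :=
  fun hu' hEq => hne (hc.symm.trans hEq)

lemma comp_eq_of_avoid {x y : V} (hx : x ≠ v) (hy : y ≠ v) (p : G.Walk x y)
    (hv : v ∉ p.support) :
    (G.induce {w : V | w ≠ v}).connectedComponentMk ⟨x, hx⟩ =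
      (G.induce {w : V | w ≠ v}).connectedComponentMk ⟨y, hy⟩ := by
  obtain ⟨q, -⟩ := walk_induce (S := {w : V | w ≠ v}) p hx hy
    (fun z hz hzv => hv (hzv ▸ hz))
  exact ConnectedComponent.sound ⟨q⟩

/-- Surgery: any walk between vertices of `Sc` can be replaced by a walk inside the induced
subgraph on `Sc` of no greater length. -/
lemma surgery (c : (G.induce {w : V | w ≠ v}).ConnectedComponent) :
    ∀ (n : ℕ) ⦃x y : V⦄ (hx : x ∈ Sc G v c) (hy : y ∈ Sc G v c) (p : G.Walk x y),
      p.length ≤ n →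
      ∃ q : (G.induce (Sc G v c)).Walk ⟨x, hx⟩ ⟨y, hy⟩, q.length ≤ p.length := by
  classical
  intro n
  induction n with
  | zero =>
    intro x y hx hy p hlen
    have hall : ∀ z ∈ p.support, z ∈ Sc G v c := by
      cases p with
      | nil =>
        intro z hz
        simp only [SimpleGraph.Walk.support_nil, List.mem_singleton] at hz
        subst hz; exact hx
      | cons h q => simp at hlen
    obtain ⟨q, hq⟩ := walk_induce p hx hy hall
    exact ⟨q, le_of_eq hq⟩
  | succ n ih =>
    intro x y hx hy p hlen
    by_cases hall : ∀ z ∈ p.support, z ∈ Sc G v c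
    · obtain ⟨q, hq⟩ := walk_induce p hx hy hall
      exact ⟨q, le_of_eq hq⟩
    · push_neg at hall
      obtain ⟨z, hzsup, hz⟩ := hall
      rw [not_mem_Sc] at hz
      obtain ⟨hzv, hzc⟩ := hz
      set p1 := p.takeUntil z hzsup with hp1
      set p2 := p.dropUntil z hzsup with hp2
      have hsplit : p1.append p2 = p := p.take_spec hzsup
      have hlen12 : p1.length + p2.length = p.length := by
        rw [← hsplit, SimpleGraph.Walk.length_append]
      have hvp1 : v ∈ p1.support := by
        by_contra hv1
        have hxv : x ≠ v := by
          intro hxv; subst hxv; exact hv1 p1.start_mem_support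
        exact hx hxv ((comp_eq_of_avoid hxv hzv p1 hv1).trans hzc)
      have hvp2 : v ∈ p2.support := by
        by_contra hv2
        have hyv : y ≠ v := by
          intro hyv; subst hyv; exact hv2 p2.end_mem_support
        exact hy hyv (((comp_eq_of_avoid hzv hyv p2 hv2).symm).trans hzc)
      set t1 := p1.takeUntil v hvp1 with ht1
      set d2 := p2.dropUntil v hvp2 with hd2
      have hlt1 : t1.length ≤ p1.length := SimpleGraph.Walk.length_takeUntil_le p1 hvp1
      have hld2 : d2.length + 1 ≤ p2.length := by
        have hsp2 : (p2.takeUntil v hvp2).append d2 = p2 := p2.take_spec hvp2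
        have hadd := congrArg SimpleGraph.Walk.length hsp2
        rw [SimpleGraph.Walk.length_append] at hadd
        have hpos : 0 < (p2.takeUntil v hvp2).length := by
          rcases Nat.eq_zero_or_pos (p2.takeUntil v hvp2).length with h | h
          · exact absurd (SimpleGraph.Walk.eq_of_length_eq_zero h) hzv
          · exact h
        omega
      have hlp' : (t1.append d2).length < p.length := by
        have : (t1.append d2).length = t1.length + d2.length :=
          SimpleGraph.Walk.length_append _ _
        omega
      obtain ⟨q, hq⟩ := ih hx hy (t1.append d2) (by omega)
      exact ⟨q, by omega⟩

lemma dist_induce_eq (hconn : G.Connected)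
    (c : (G.induce {w : V | w ≠ v}).ConnectedComponent)
    (x y : ↥(Sc G v c)) :
    (G.induce (Sc G v c)).dist x y = G.dist (x : V) (y : V) := by
  obtain ⟨x, hx⟩ := x
  obtain ⟨y, hy⟩ := y
  show (G.induce (Sc G v c)).dist ⟨x, hx⟩ ⟨y, hy⟩ = G.dist x y
  have hr : G.Reachable x y := hconn.preconnected x y
  obtain ⟨p, hp⟩ := hr.exists_walk_length_eq_dist
  obtain ⟨q, hq⟩ := surgery c p.length hx hy p le_rfl
  have h1 : (G.induce (Sc G v c)).dist ⟨x, hx⟩ ⟨y, hy⟩ ≤ q.length := SimpleGraph.dist_le q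
  have hr' : (G.induce (Sc G v c)).Reachable ⟨x, hx⟩ ⟨y, hy⟩ := ⟨q⟩
  obtain ⟨q', hq'⟩ := hr'.exists_walk_length_eq_dist
  have h2 : G.dist x y ≤ (q'.map (SimpleGraph.Embedding.induce (Sc G v c)).toHom).length :=
    SimpleGraph.dist_le _
  rw [SimpleGraph.Walk.length_map] at h2
  omega

/-- If `a` lies in the component `c0` of `G - v` and `t` does not, then
`dist a t = dist a v + dist v t`. -/
lemma dist_split (hconn : G.Connected)
    (c0 : (G.induce {w : V | w ≠ v}).ConnectedComponent)
    {a t : V} (ha : a ≠ v)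
    (hac : (G.induce {w : V | w ≠ v}).connectedComponentMk ⟨a, ha⟩ = c0)
    (ht : t ∈ Sc G v c0) :
    G.dist a t = G.dist a v + G.dist v t := by
  classical
  by_cases htv : t = v
  · subst htv; simp
  · have hle : G.dist a t ≤ G.dist a v + G.dist v t := hconn.dist_triangle
    have hge : G.dist a v + G.dist v t ≤ G.dist a t := by
      obtain ⟨p, hp⟩ := (hconn.preconnected a t).exists_walk_length_eq_dist
      have hv : v ∈ p.support := by
        by_contra hv
        exact ht htv ((comp_eq_of_avoid ha htv p hv).symm.trans hac)
      have h1 : G.dist a v ≤ (p.takeUntil v hv).length := SimpleGraph.dist_le _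
      have h2 : G.dist v t ≤ (p.dropUntil v hv).length := SimpleGraph.dist_le _
      have h3 : (p.takeUntil v hv).length + (p.dropUntil v hv).length = p.length := by
        rw [← SimpleGraph.Walk.length_append, p.take_spec hv]
      omega
    omega

/-- Replacement: if `a` lies in component `c0` and `b, c, d` do not, then replacing `a` by `v`
does not change the four-point quantity. -/
lemma delta4_repl (hconn : G.Connected)
    (c0 : (G.induce {w : V | w ≠ v}).ConnectedComponent)
    {a b c d : V} (ha : a ≠ v)
    (hac : (G.induce {w : V | w ≠ v}).connectedComponentMk ⟨a, ha⟩ = c0)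
    (hb : b ∈ Sc G v c0) (hc : c ∈ Sc G v c0) (hd : d ∈ Sc G v c0) :
    delta4 G a b c d = delta4 G v b c d := by
  have e1 := dist_split hconn c0 ha hac hb
  have e2 := dist_split hconn c0 ha hac hc
  have e3 := dist_split hconn c0 ha hac hd
  simp only [delta4]
  omega

/-- The 2+2 case: if `a, b` lie in one component and `c, d` in another, then δ(a,b,c,d) = 0. -/
lemma delta4_two_two (hconn : G.Connected)
    {c1 c2 : (G.induce {w : V | w ≠ v}).ConnectedComponent} (h12 : c1 ≠ c2)
    {a b c d : V} (ha : a ≠ v) (hb : b ≠ v) (hc : c ≠ v) (hd : d ≠ v)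
    (hac : (G.induce {w : V | w ≠ v}).connectedComponentMk ⟨a, ha⟩ = c1)
    (hbc : (G.induce {w : V | w ≠ v}).connectedComponentMk ⟨b, hb⟩ = c1)
    (hcc : (G.induce {w : V | w ≠ v}).connectedComponentMk ⟨c, hc⟩ = c2)
    (hdc : (G.induce {w : V | w ≠ v}).connectedComponentMk ⟨d, hd⟩ = c2) :
    delta4 G a b c d = 0 := by
  have hcS : c ∈ Sc G v c1 := mem_Sc_of_ne hc hcc (Ne.symm h12)
  have hdS : d ∈ Sc G v c1 := mem_Sc_of_ne hd hdc (Ne.symm h12)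
  have e_ac : G.dist a c = G.dist a v + G.dist v c := dist_split hconn c1 ha hac hcS
  have e_ad : G.dist a d = G.dist a v + G.dist v d := dist_split hconn c1 ha hac hdS
  have e_bc : G.dist b c = G.dist b v + G.dist v c := dist_split hconn c1 hb hbc hcS
  have e_bd : G.dist b d = G.dist b v + G.dist v d := dist_split hconn c1 hb hbc hdS
  have t_ab : G.dist a b ≤ G.dist a v + G.dist v b := hconn.dist_triangle
  have t_cd : G.dist c d ≤ G.dist c v + G.dist v d := hconn.dist_triangle
  have s1 : G.dist v b = G.dist b v := SimpleGraph.dist_comm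
  have s2 : G.dist c v = G.dist v c := SimpleGraph.dist_comm
  simp only [delta4]
  omega

end Main

set_option maxHeartbeats 1000000 in
/-- If v is a cut vertex of a connected graph G with more than four vertices, then there is
a connected component A_i of G - v such that deleting the vertices of A_i from G does not
change the hyperbolicity. -/
theorem cut_vertex_component_deletion {V : Type*} [Fintype V] (G : SimpleGraph V)
    (hconn : G.Connected) (hcard : 4 < Fintype.card V) (v : V)
    (hcut : ¬ (G.induce {w : V | w ≠ v}).Connected) :
    ∃ c : (G.induce {w : V | w ≠ v}).ConnectedComponent,
      hyperbolicity
        (G.induce {u : V | ∀ hu : u ≠ v,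
          (G.induce {w : V | w ≠ v}).connectedComponentMk ⟨u, hu⟩ ≠ c}) =
      hyperbolicity G := by
  classical
  have hfinV : Finite V := Finite.of_fintype V
  have hVne : Nonempty V := ⟨v⟩
  -- two distinct components of G - v
  have hex : ∃ w : V, w ≠ v := by
    have h1 : 1 < Fintype.card V := by omega
    exact Fintype.exists_ne_of_one_lt_card h1 v
  obtain ⟨w0, hw0⟩ := hex
  have hne' : Nonempty {w : V | w ≠ v} := ⟨⟨w0, hw0⟩⟩
  have hnp : ∃ u1 u2 : {w : V | w ≠ v}, ¬ (G.induce {w : V | w ≠ v}).Reachable u1 u2 := by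
    by_contra h
    push_neg at h
    exact hcut ((SimpleGraph.connected_iff _).mpr ⟨fun u1 u2 => h u1 u2, hne'⟩)
  obtain ⟨u1, u2, hu⟩ := hnp
  set c1 := (G.induce {w : V | w ≠ v}).connectedComponentMk u1 with hc1def
  set c2 := (G.induce {w : V | w ≠ v}).connectedComponentMk u2 with hc2def
  have h12 : c1 ≠ c2 := fun h => hu (ConnectedComponent.exact h)
  -- extremal quadruple for G
  obtain ⟨⟨x1, x2, x3, x4, hx⟩, hle⟩ := hyperbolicity_spec G
  -- key step: find a component c0 and a quadruple in Sc G v c0 with the same delta4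
  have key : ∃ c0 : (G.induce {w : V | w ≠ v}).ConnectedComponent,
      ∃ y1 y2 y3 y4 : V, y1 ∈ Sc G v c0 ∧ y2 ∈ Sc G v c0 ∧ y3 ∈ Sc G v c0 ∧ y4 ∈ Sc G v c0 ∧
        delta4 G y1 y2 y3 y4 = delta4 G x1 x2 x3 x4 := by
    by_cases hA : ∃ c0, x1 ∈ Sc G v c0 ∧ x2 ∈ Sc G v c0 ∧ x3 ∈ Sc G v c0 ∧ x4 ∈ Sc G v c0
    · obtain ⟨c0, h1, h2, h3, h4⟩ := hA
      exact ⟨c0, x1, x2, x3, x4, h1, h2, h3, h4, rfl⟩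
    · -- every component contains one of the four points; apply to c1 and c2
      have hcov : ∀ c0 : (G.induce {w : V | w ≠ v}).ConnectedComponent,
          x1 ∉ Sc G v c0 ∨ x2 ∉ Sc G v c0 ∨ x3 ∉ Sc G v c0 ∨ x4 ∉ Sc G v c0 := by
        intro c0
        by_contra h
        push_neg at h
        exact hA ⟨c0, h.1, h.2.1, h.2.2.1, h.2.2.2⟩
      -- a general helper, proven for a quadruple with the first point in c1 and the second
      -- in c2; we then reduce to this situation by permutations.
      have main : ∀ a b c d : V, a ∉ Sc G v c1 → b ∉ Sc G v c2 →
          ∃ c0 : (G.induce {w : V | w ≠ v}).ConnectedComponent,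
            ∃ y1 y2 y3 y4 : V, y1 ∈ Sc G v c0 ∧ y2 ∈ Sc G v c0 ∧ y3 ∈ Sc G v c0 ∧
              y4 ∈ Sc G v c0 ∧ delta4 G y1 y2 y3 y4 = delta4 G a b c d := by
        intro a b c d h1 h2
        obtain ⟨h1v, h1c⟩ := not_mem_Sc.mp h1
        obtain ⟨h2v, h2c⟩ := not_mem_Sc.mp h2
        have haS2 : a ∈ Sc G v c2 := mem_Sc_of_ne h1v h1c h12
        have hbS1 : b ∈ Sc G v c1 := mem_Sc_of_ne h2v h2c (Ne.symm h12)
        by_cases h3 : c ∈ Sc G v c1 <;> by_cases h4 : d ∈ Sc G v c1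
        · -- only `a` in c1 : replace a by v
          exact ⟨c1, v, b, c, d, v_mem_Sc c1, hbS1, h3, h4,
            (delta4_repl hconn c1 h1v h1c hbS1 h3 h4).symm⟩
        · -- d ∈ c1 as well; look at c
          obtain ⟨h4v, h4c⟩ := not_mem_Sc.mp h4
          have hdS2 : d ∈ Sc G v c2 := mem_Sc_of_ne h4v h4c h12
          by_cases h3' : c ∈ Sc G v c2
          · -- only `b` in c2 : replace b by v
            refine ⟨c2, a, v, c, d, haS2, v_mem_Sc c2, h3', hdS2, ?_⟩
            calc delta4 G a v c d = delta4 G v a c d := delta4_swap12 G a v c d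
              _ = delta4 G b a c d := (delta4_repl hconn c2 h2v h2c haS2 h3' hdS2).symm
              _ = delta4 G a b c d := delta4_swap12 G b a c d
          · -- pattern (c1, c2, c2, c1) : δ = 0
            obtain ⟨h3v, h3c⟩ := not_mem_Sc.mp h3'
            have h0 : delta4 G a d b c = 0 :=
              delta4_two_two hconn h12 h1v h4v h2v h3v h1c h4c h2c h3c
            have hperm : delta4 G a b c d = delta4 G a d b c := by
              rw [delta4_swap24 G a b c d, delta4_swap34 G a d c b]
            exact ⟨c1, v, v, v, v, v_mem_Sc c1, v_mem_Sc c1, v_mem_Sc c1, v_mem_Sc c1,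
              by rw [hperm, h0, delta4_self]⟩
        · -- c ∈ c1 as well; look at d
          obtain ⟨h3v, h3c⟩ := not_mem_Sc.mp h3
          have hcS2 : c ∈ Sc G v c2 := mem_Sc_of_ne h3v h3c h12
          by_cases h4' : d ∈ Sc G v c2
          · -- only `b` in c2 : replace b by v
            refine ⟨c2, a, v, c, d, haS2, v_mem_Sc c2, hcS2, h4', ?_⟩
            calc delta4 G a v c d = delta4 G v a c d := delta4_swap12 G a v c d
              _ = delta4 G b a c d := (delta4_repl hconn c2 h2v h2c haS2 hcS2 h4').symm
              _ = delta4 G a b c d := delta4_swap12 G b a c d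
          · -- pattern (c1, c2, c1, c2) : δ = 0
            obtain ⟨h4v, h4c⟩ := not_mem_Sc.mp h4'
            have h0 : delta4 G a c b d = 0 :=
              delta4_two_two hconn h12 h1v h3v h2v h4v h1c h3c h2c h4c
            have hperm : delta4 G a b c d = delta4 G a c b d := delta4_swap23 G a b c d
            exact ⟨c1, v, v, v, v, v_mem_Sc c1, v_mem_Sc c1, v_mem_Sc c1, v_mem_Sc c1,
              by rw [hperm, h0, delta4_self]⟩
        · -- c, d ∈ c1 : only `b` in c2, replace b by v
          obtain ⟨h3v, h3c⟩ := not_mem_Sc.mp h3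
          obtain ⟨h4v, h4c⟩ := not_mem_Sc.mp h4
          have hcS2 : c ∈ Sc G v c2 := mem_Sc_of_ne h3v h3c h12
          have hdS2 : d ∈ Sc G v c2 := mem_Sc_of_ne h4v h4c h12
          refine ⟨c2, a, v, c, d, haS2, v_mem_Sc c2, hcS2, hdS2, ?_⟩
          calc delta4 G a v c d = delta4 G v a c d := delta4_swap12 G a v c d
            _ = delta4 G b a c d := (delta4_repl hconn c2 h2v h2c haS2 hcS2 hdS2).symm
            _ = delta4 G a b c d := delta4_swap12 G b a c d
      -- reduce the general situation to `main` by permutations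
      rcases hcov c1 with hc1m | hc1m | hc1m | hc1m <;>
        rcases hcov c2 with hc2m | hc2m | hc2m | hc2m
      all_goals first
      | (exfalso
         obtain ⟨hv', hc'⟩ := not_mem_Sc.mp hc1m
         obtain ⟨hv'', hc''⟩ := not_mem_Sc.mp hc2m
         exact h12 (hc'.symm.trans hc''))
      | skip
      -- remaining 12 cases, in order (i,j) with x_i in c1, x_j in c2
      · -- (1,2)
        exact main x1 x2 x3 x4 hc1m hc2m
      · -- (1,3)
        obtain ⟨c0, y1, y2, y3, y4, m1, m2, m3, m4, hd⟩ := main x1 x3 x2 x4 hc1m hc2m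
        exact ⟨c0, y1, y2, y3, y4, m1, m2, m3, m4, hd.trans (delta4_swap23 G x1 x3 x2 x4)⟩
      · -- (1,4)
        obtain ⟨c0, y1, y2, y3, y4, m1, m2, m3, m4, hd⟩ := main x1 x4 x3 x2 hc1m hc2m
        exact ⟨c0, y1, y2, y3, y4, m1, m2, m3, m4, hd.trans (delta4_swap24 G x1 x4 x3 x2)⟩
      · -- (2,1)
        obtain ⟨c0, y1, y2, y3, y4, m1, m2, m3, m4, hd⟩ := main x2 x1 x3 x4 hc1m hc2m
        exact ⟨c0, y1, y2, y3, y4, m1, m2, m3, m4, hd.trans (delta4_swap12 G x2 x1 x3 x4)⟩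
      · -- (2,3)
        obtain ⟨c0, y1, y2, y3, y4, m1, m2, m3, m4, hd⟩ := main x2 x3 x1 x4 hc1m hc2m
        refine ⟨c0, y1, y2, y3, y4, m1, m2, m3, m4, hd.trans ?_⟩
        rw [delta4_swap23 G x2 x3 x1 x4, delta4_swap12 G x2 x1 x3 x4]
      · -- (2,4)
        obtain ⟨c0, y1, y2, y3, y4, m1, m2, m3, m4, hd⟩ := main x2 x4 x3 x1 hc1m hc2m
        refine ⟨c0, y1, y2, y3, y4, m1, m2, m3, m4, hd.trans ?_⟩
        rw [delta4_swap24 G x2 x4 x3 x1, delta4_swap12 G x2 x1 x3 x4]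
      · -- (3,1)
        obtain ⟨c0, y1, y2, y3, y4, m1, m2, m3, m4, hd⟩ := main x3 x1 x2 x4 hc1m hc2m
        refine ⟨c0, y1, y2, y3, y4, m1, m2, m3, m4, hd.trans ?_⟩
        rw [delta4_swap12 G x3 x1 x2 x4, delta4_swap23 G x1 x3 x2 x4]
      · -- (3,2)
        obtain ⟨c0, y1, y2, y3, y4, m1, m2, m3, m4, hd⟩ := main x3 x2 x1 x4 hc1m hc2m
        exact ⟨c0, y1, y2, y3, y4, m1, m2, m3, m4, hd.trans (delta4_swap13 G x3 x2 x1 x4)⟩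
      · -- (3,4)
        obtain ⟨c0, y1, y2, y3, y4, m1, m2, m3, m4, hd⟩ := main x3 x4 x1 x2 hc1m hc2m
        refine ⟨c0, y1, y2, y3, y4, m1, m2, m3, m4, hd.trans ?_⟩
        rw [delta4_swap13 G x3 x4 x1 x2, delta4_swap24 G x1 x4 x3 x2]
      · -- (4,1)
        obtain ⟨c0, y1, y2, y3, y4, m1, m2, m3, m4, hd⟩ := main x4 x1 x3 x2 hc1m hc2m
        refine ⟨c0, y1, y2, y3, y4, m1, m2, m3, m4, hd.trans ?_⟩
        rw [delta4_swap12 G x4 x1 x3 x2, delta4_swap24 G x1 x4 x3 x2]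
      · -- (4,2)
        obtain ⟨c0, y1, y2, y3, y4, m1, m2, m3, m4, hd⟩ := main x4 x2 x3 x1 hc1m hc2m
        exact ⟨c0, y1, y2, y3, y4, m1, m2, m3, m4, hd.trans (delta4_swap14 G x4 x2 x3 x1)⟩
      · -- (4,3)
        obtain ⟨c0, y1, y2, y3, y4, m1, m2, m3, m4, hd⟩ := main x4 x3 x1 x2 hc1m hc2m
        refine ⟨c0, y1, y2, y3, y4, m1, m2, m3, m4, hd.trans ?_⟩
        rw [delta4_swap13 G x4 x3 x1 x2, delta4_swap24 G x1 x3 x4 x2, delta4_swap34 G x1 x2 x4 x3]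
  obtain ⟨c0, y1, y2, y3, y4, hy1, hy2, hy3, hy4, hyd⟩ := key
  refine ⟨c0, ?_⟩
  show hyperbolicity (G.induce (Sc G v c0)) = hyperbolicity G
  have hScne : Nonempty ↥(Sc G v c0) := ⟨⟨v, v_mem_Sc c0⟩⟩
  have hdeq := dist_induce_eq hconn c0
  obtain ⟨⟨a, b, c, d, hH⟩, hHle⟩ := hyperbolicity_spec (G.induce (Sc G v c0))
  refine le_antisymm ?_ ?_
  · rw [← hH, delta4_induce_eq a b c d hdeq]
    exact hle _ _ _ _
  · calc hyperbolicity G = delta4 G x1 x2 x3 x4 := hx.symm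
      _ = delta4 G y1 y2 y3 y4 := hyd.symm
      _ = delta4 (G.induce (Sc G v c0)) ⟨y1, hy1⟩ ⟨y2, hy2⟩ ⟨y3, hy3⟩ ⟨y4, hy4⟩ :=
        (delta4_induce_eq (G := G) (S := Sc G v c0) ⟨y1, hy1⟩ ⟨y2, hy2⟩ ⟨y3, hy3⟩ ⟨y4, hy4⟩ hdeq).symm
      _ ≤ hyperbolicity (G.induce (Sc G v c0)) := hHle _ _ _ _
end

section
/- Let G be a connected simple graph, let a, b, c, d, v be vertices of G, and suppose that dist(x,d) = dist(x,v) + dist(v,d) for every x ∈ {a,b,c}. Then δ(a,b,c,d) = δ(a,b,c,v). -/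
/-- If v lies on a shortest path from each of a, b, c to d, then δ(a,b,c,d) = δ(a,b,c,v). -/
theorem delta4_replace_by_separator {V : Type*} (G : SimpleGraph V) (hconn : G.Connected)
    (a b c d v : V)
    (hsep : ∀ x ∈ ({a, b, c} : Set V), G.dist x d = G.dist x v + G.dist v d) :
    delta4 G a b c d = delta4 G a b c v := by
  have ha := hsep a (by simp)
  have hb := hsep b (by simp)
  have hc := hsep c (by simp)
  simp only [delta4, ha, hb, hc]
  generalize G.dist v d = k
  generalize G.dist a b = x1
  generalize G.dist c v = x2
  generalize G.dist a c = y1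
  generalize G.dist b v = y2
  generalize G.dist a v = z1
  generalize G.dist b c = z2
  have h1 : x1 + (x2 + k) = (x1 + x2) + k := by ring
  have h2 : y1 + (y2 + k) = (y1 + y2) + k := by ring
  have h3 : (z1 + k) + z2 = (z1 + z2) + k := by ring
  rw [h1, h2, h3, max_add_add_right, max_add_add_right, max_add_add_right,
    max_add_add_right, min_add_add_right, min_add_add_right, Nat.add_sub_add_right]
end

section
/- Let G = (V,E) be a connected simple graph with |V| > 4 and let v ∈ V be a vertex of degree one in G. Then δ(G − v) = δ(G), i.e., deleting a degree-one vertex of a graph with more than four vertices does not change the hyperbolicity. -/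
/-!
Every shortest path between two vertices other than the leaf `v` avoids `v`, so `G - v` is an
isometric subgraph of `G`, and `v` is one step further than its neighbour `u` from every other
vertex. Moving `v` to `u` in a quadruple of pairwise distinct points therefore raises all three
distance sums by the same amount, while a quadruple with a repeated point has `δ = 0` before and
after the move. Hence `G` and `G - v` realise exactly the same values of `δ`.
-/

/-- The degree of a vertex (number of neighbors). -/
noncomputable def deg {V : Type*} (G : SimpleGraph V) (w : V) : ℕ :=
  (G.neighborSet w).ncard

namespace SimpleGraph

variable {V : Type*} {G : SimpleGraph V}

theorem dist_induce_of_subsingleton_neighborSet (hG : G.Preconnected) {s : Set V}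
    (hs : ∀ v ∉ s, (G.neighborSet v).Subsingleton) (x y : s) :
    (G.induce s).dist x y = G.dist x y := by
  obtain ⟨p, hp, hlen⟩ := (hG x y).exists_path_of_dist
  have hps : ∀ w ∈ p.support, w ∈ s := fun w hw => by
    by_contra hws
    exact hp.isTrail.not_mem_support_of_subsingleton_neighborSet
      (by rintro rfl; exact hws x.2) (by rintro rfl; exact hws y.2) (hs w hws) hw
  let q := p.induce s hps
  have hq : q.length = p.length := by
    rw [← Walk.length_map (Embedding.induce s).toHom, Walk.map_induce]; rfl
  refine le_antisymm (hlen ▸ hq ▸ dist_le q) ?_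
  obtain ⟨r, hr⟩ := Reachable.exists_walk_length_eq_dist ⟨q⟩
  calc G.dist x y ≤ (r.map (Embedding.induce s).toHom).length := dist_le _
    _ = (G.induce s).dist x y := by rw [Walk.length_map, hr]

theorem delta4_induce_of_subsingleton_neighborSet (hG : G.Preconnected) {s : Set V}
    (hs : ∀ v ∉ s, (G.neighborSet v).Subsingleton) (a b c d : s) :
    delta4 (G.induce s) a b c d = delta4 G a b c d := by
  simp only [delta4, dist_induce_of_subsingleton_neighborSet hG hs]

theorem Connected.dist_eq_dist_add_one_of_neighborSet_eq (hG : G.Connected) {u v x : V}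
    (h : G.neighborSet v = {u}) (hx : x ≠ v) : G.dist v x = G.dist u x + 1 := by
  have hvu : u ∈ G.neighborSet v := h ▸ Set.mem_singleton u
  refine le_antisymm ?_ ?_
  · calc G.dist v x ≤ G.dist v u + G.dist u x := hG.dist_triangle
      _ = G.dist u x + 1 := by rw [dist_eq_one_iff_adj.mpr hvu, add_comm]
  · obtain ⟨p, -, hlen⟩ := hG.exists_path_of_dist v x
    cases p with
    | nil => exact absurd rfl hx
    | cons hvw q =>
      obtain rfl : _ = u := Set.eq_of_mem_singleton (by rw [← h]; exact hvw)
      rw [← hlen, Walk.length_cons]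
      exact Nat.add_le_add_right (dist_le q) 1

theorem Connected.delta4_eq_zero (hG : G.Connected) {a b c d : V}
    (h : a = b ∨ a = c ∨ a = d ∨ b = c ∨ b = d ∨ c = d) : delta4 G a b c d = 0 := by
  -- the triangle inequality through the repeated point, one for each of the six cases
  have := hG.dist_triangle (u := c) (v := a) (w := d)
  have := hG.dist_triangle (u := b) (v := a) (w := d)
  have := hG.dist_triangle (u := b) (v := a) (w := c)
  have := hG.dist_triangle (u := a) (v := b) (w := d)
  have := hG.dist_triangle (u := a) (v := b) (w := c)
  have := hG.dist_triangle (u := a) (v := c) (w := b)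
  rcases h with rfl | rfl | rfl | rfl | rfl | rfl <;>
    simp only [delta4, dist_self, dist_comm] at * <;> omega

theorem Connected.dist_eq_dist_update_add (hG : G.Connected) [DecidableEq V] {u v x y : V}
    (h : G.neighborSet v = {u}) (hxy : x ≠ y) :
    G.dist x y = G.dist (Function.update id v u x) (Function.update id v u y) +
      (if x = v then 1 else 0) + (if y = v then 1 else 0) := by
  by_cases hx : x = v <;> by_cases hy : y = v
  · exact absurd (hx.trans hy.symm) hxy
  · subst hx
    simp [hy, hG.dist_eq_dist_add_one_of_neighborSet_eq h hy]
  · subst hy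
    simp [hx, dist_comm (u := x), hG.dist_eq_dist_add_one_of_neighborSet_eq h hx]
  · simp [hx, hy]

theorem Connected.delta4_update_leaf (hG : G.Connected) [DecidableEq V] {u v : V}
    (h : G.neighborSet v = {u}) (a b c d : V) :
    delta4 G a b c d = delta4 G (Function.update id v u a) (Function.update id v u b)
      (Function.update id v u c) (Function.update id v u d) := by
  by_cases hrep : a = b ∨ a = c ∨ a = d ∨ b = c ∨ b = d ∨ c = d
  · rw [hG.delta4_eq_zero hrep, hG.delta4_eq_zero]
    rcases hrep with rfl | rfl | rfl | rfl | rfl | rfl <;> simp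
  · simp only [not_or] at hrep
    obtain ⟨hab, hac, had, hbc, hbd, hcd⟩ := hrep
    simp only [delta4, hG.dist_eq_dist_update_add h hab, hG.dist_eq_dist_update_add h hac,
      hG.dist_eq_dist_update_add h had, hG.dist_eq_dist_update_add h hbc,
      hG.dist_eq_dist_update_add h hbd, hG.dist_eq_dist_update_add h hcd]
    omega

end SimpleGraph

theorem hyperbolicity_delete_degree_one_general {V : Type*} (G : SimpleGraph V)
    (hconn : G.Connected) (v : V) (hdeg : deg G v = 1) :
    hyperbolicity (G.induce {w : V | w ≠ v}) = hyperbolicity G := by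
  classical
  obtain ⟨u, hu⟩ := Set.ncard_eq_one.mp hdeg
  have hvu : u ∈ G.neighborSet v := hu ▸ Set.mem_singleton u
  have huv : u ≠ v := (G.ne_of_adj hvu).symm
  have hleaf : ∀ w ∉ {w : V | w ≠ v}, (G.neighborSet w).Subsingleton := by
    intro w hw
    obtain rfl : w = v := not_not.mp hw
    exact hu ▸ Set.subsingleton_singleton
  have hδ := SimpleGraph.delta4_induce_of_subsingleton_neighborSet hconn.preconnected hleaf
  let r (x : V) : {w : V | w ≠ v} := ⟨Function.update id v u x, by
    by_cases hx : x = v <;> simp [hx, huv]⟩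
  unfold hyperbolicity
  congr 1
  ext n
  constructor
  · rintro ⟨a, b, c, d, rfl⟩
    exact ⟨a, b, c, d, (hδ a b c d).symm⟩
  · rintro ⟨a, b, c, d, rfl⟩
    exact ⟨r a, r b, r c, r d, by rw [hδ]; exact (hconn.delta4_update_leaf hu a b c d).symm⟩

/-- Deleting a degree-one vertex of a connected graph with more than four vertices does
not change the hyperbolicity. -/
theorem hyperbolicity_delete_degree_one {V : Type*} [Fintype V] (G : SimpleGraph V)
    (hconn : G.Connected) (hcard : 4 < Fintype.card V) (v : V) (hdeg : deg G v = 1) :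
    hyperbolicity (G.induce {w : V | w ≠ v}) = hyperbolicity G :=
  hyperbolicity_delete_degree_one_general G hconn v hdeg
end

section
/- Let G be a connected simple graph and let u, v be two distinct vertices with the same open neighborhood, N(u) = N(v). Then for all vertices x, y, z ∈ V(G) \ {u,v} it holds that δ(u,x,y,z) = δ(v,x,y,z). -/
private lemma twin_dist_le {V : Type*} (G : SimpleGraph V) (hconn : G.Connected)
    (u v : V) (htwin : G.neighborSet u = G.neighborSet v) (w : V) (hw : w ≠ u) :
    G.dist v w ≤ G.dist u w := by
  obtain ⟨p, hp⟩ := hconn.exists_walk_length_eq_dist u w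
  cases p with
  | nil => exact absurd rfl hw
  | @cons _ a _ h q =>
    have h' : G.Adj v a := by
      rw [← SimpleGraph.mem_neighborSet, ← htwin]
      exact h
    calc G.dist v w ≤ (SimpleGraph.Walk.cons h' q).length := G.dist_le _
      _ = G.dist u w := by simpa using hp

private lemma twin_dist_eq {V : Type*} (G : SimpleGraph V) (hconn : G.Connected)
    (u v : V) (htwin : G.neighborSet u = G.neighborSet v) (w : V)
    (hwu : w ≠ u) (hwv : w ≠ v) :
    G.dist u w = G.dist v w :=
  le_antisymm (twin_dist_le G hconn v u htwin.symm w hwv)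
    (twin_dist_le G hconn u v htwin w hwu)

/-- Two distinct vertices with the same open neighborhood are interchangeable with respect
to the four-point quantity δ. -/
theorem delta4_eq_of_twins {V : Type*} (G : SimpleGraph V) (hconn : G.Connected)
    (u v : V) (hne : u ≠ v) (htwin : G.neighborSet u = G.neighborSet v) :
    ∀ x y z : V, x ∉ ({u, v} : Set V) → y ∉ ({u, v} : Set V) → z ∉ ({u, v} : Set V) →
      delta4 G u x y z = delta4 G v x y z := by
  intro x y z hx hy hz
  simp only [Set.mem_insert_iff, Set.mem_singleton_iff, not_or] at hx hy hz
  unfold delta4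
  rw [twin_dist_eq G hconn u v htwin x hx.1 hx.2,
    twin_dist_eq G hconn u v htwin y hy.1 hy.2,
    twin_dist_eq G hconn u v htwin z hz.1 hz.2]
end

section
/- Let G = (V,E) be a connected simple graph and let v_1, v_2, …, v_ℓ ∈ V with ℓ > 4 be distinct vertices with pairwise equal open neighborhoods N(v_1) = N(v_2) = … = N(v_ℓ). Then δ(G[V \ {v_5, …, v_ℓ}]) = δ(G), i.e., deleting all but four of these vertices does not change the hyperbolicity. -/
/-!
Twins are pairwise non-adjacent, so folding every deleted twin onto a kept one is a graph
homomorphism that retracts `G` onto the induced subgraph; hence the subgraph is isometric.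
Conversely, permuting a class of twins is a graph automorphism, and some such permutation
moves the at most four twins occurring in a quadruple onto the four kept ones, so every value
of `δ` on `G` is already attained in the subgraph.
-/

theorem Equiv.Perm.apply_mem_of_forall_notMem {α : Type*} {T : Set α} {σ : Equiv.Perm α}
    (hσ : ∀ x ∉ T, σ x = x) {x : α} (hx : x ∈ T) : σ x ∈ T := by
  by_contra h
  rw [σ.injective (hσ _ h)] at h
  exact h hx

theorem Equiv.Perm.exists_forall_mem_of_card_le {α : Type*} [Fintype α]
    {s t : Finset α} (h : s.card ≤ t.card) : ∃ σ : Equiv.Perm α, ∀ x ∈ s, σ x ∈ t := by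
  obtain ⟨s', hss', -, hs'⟩ :=
    Finset.exists_subsuperset_card_eq (Finset.subset_univ s) h (Finset.card_le_univ t)
  obtain ⟨σ, hσ⟩ := Equiv.Perm.exists_map_finset_eq s' t hs'
  exact ⟨σ, fun x hx => hσ ▸ Finset.mem_map_of_mem σ.toEmbedding (hss' hx)⟩

namespace SimpleGraph

variable {V W : Type*} {G : SimpleGraph V} {G' : SimpleGraph W}

theorem Hom.dist_map_le (f : G →g G') {u w : V} (h : G.Reachable u w) :
    G'.dist (f u) (f w) ≤ G.dist u w := by
  obtain ⟨p, hp⟩ := h.exists_walk_length_eq_dist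
  simpa [hp] using dist_le (p.map f)

theorem Iso.dist_map (f : G ≃g G') (u w : V) : G'.dist (f u) (f w) = G.dist u w := by
  by_cases h : G.Reachable u w
  · refine le_antisymm (f.toHom.dist_map_le h) ?_
    simpa using f.symm.toHom.dist_map_le (h.map f.toHom)
  · rw [dist_eq_zero_of_not_reachable h, dist_eq_zero_of_not_reachable]
    exact fun h' => h (by simpa using h'.map f.symm.toHom)

theorem dist_induce_eq_of_retraction {S : Set V} (r : G →g G) (hrS : ∀ x, r x ∈ S)
    (hr : ∀ x ∈ S, r x = x) {a b : S} (hab : G.Reachable a b) :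
    (G.induce S).dist a b = G.dist a b := by
  let r' : G →g G.induce S := ⟨fun x => ⟨r x, hrS x⟩, r.map_rel⟩
  have hr' : ∀ x : S, r' x = x := fun x => Subtype.ext (hr x x.2)
  have hle := r'.dist_map_le hab
  rw [hr', hr'] at hle
  have hreach : (G.induce S).Reachable a b := by simpa [hr'] using hab.map r'
  exact le_antisymm hle ((Embedding.induce S).toHom.dist_map_le hreach)

theorem not_adj_of_neighborSet_eq {x y : V} (h : G.neighborSet x = G.neighborSet y) :
    ¬G.Adj x y := fun hxy => G.irrefl (h ▸ hxy : y ∈ G.neighborSet y)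

open Classical in
noncomputable def collapseTwins (D : Set V) (w : V)
    (hD : ∀ x ∈ D, G.neighborSet x = G.neighborSet w) : G →g G where
  toFun x := if x ∈ D then w else x
  map_rel' {x y} hxy := by
    by_cases hx : x ∈ D <;> by_cases hy : y ∈ D <;> simp only [hx, hy, if_true, if_false]
    · exact absurd hxy (not_adj_of_neighborSet_eq ((hD x hx).trans (hD y hy).symm))
    · exact (hD x hx ▸ hxy : y ∈ G.neighborSet w)
    · exact (hD y hy ▸ hxy.symm : x ∈ G.neighborSet w).symm
    · exact hxy

def Iso.ofPermTwins (T : Set V) (hT : ∀ x ∈ T, ∀ y ∈ T, G.neighborSet x = G.neighborSet y)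
    (σ : Equiv.Perm V) (hσ : ∀ x ∉ T, σ x = x) : G ≃g G where
  toEquiv := σ
  map_rel_iff' {x y} := by
    have key : ∀ x ∈ T, ∀ y ∉ T, (G.Adj (σ x) y ↔ G.Adj x y) := fun x hx y _ => by
      rw [← mem_neighborSet, ← mem_neighborSet,
        hT _ (Equiv.Perm.apply_mem_of_forall_notMem hσ hx) x hx]
    by_cases hx : x ∈ T <;> by_cases hy : y ∈ T
    · have hσx := Equiv.Perm.apply_mem_of_forall_notMem hσ hx
      have hσy := Equiv.Perm.apply_mem_of_forall_notMem hσ hy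
      exact iff_of_false (not_adj_of_neighborSet_eq (hT _ hσx _ hσy))
        (not_adj_of_neighborSet_eq (hT x hx y hy))
    · simpa [hσ y hy] using key x hx y hy
    · simpa [hσ x hx, G.adj_comm x] using key y hy x hx
    · simp [hσ x hx, hσ y hy]

end SimpleGraph

theorem delta4_map_of_dist_eq {V W : Type*} {G : SimpleGraph V} {G' : SimpleGraph W}
    {f : V → W} (hf : ∀ x y, G'.dist (f x) (f y) = G.dist x y) (a b c d : V) :
    delta4 G' (f a) (f b) (f c) (f d) = delta4 G a b c d := by
  simp only [delta4, hf]

theorem hyperbolicity_induce_eq {V : Type*} {G : SimpleGraph V} {S : Set V}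
    (hS : ∀ x y : S, (G.induce S).dist x y = G.dist x y)
    (hmove : ∀ a b c d : V, ∃ σ : G ≃g G, σ a ∈ S ∧ σ b ∈ S ∧ σ c ∈ S ∧ σ d ∈ S) :
    hyperbolicity (G.induce S) = hyperbolicity G := by
  have hval := delta4_map_of_dist_eq (f := Subtype.val) fun x y => (hS x y).symm
  unfold hyperbolicity
  congr 1
  ext n
  constructor
  · rintro ⟨a, b, c, d, rfl⟩
    exact ⟨a, b, c, d, hval a b c d⟩
  · rintro ⟨a, b, c, d, rfl⟩
    obtain ⟨σ, ha, hb, hc, hd⟩ := hmove a b c d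
    refine ⟨⟨σ a, ha⟩, ⟨σ b, hb⟩, ⟨σ c, hc⟩, ⟨σ d, hd⟩, ?_⟩
    rw [← hval, delta4_map_of_dist_eq σ.dist_map]

namespace SimpleGraph

variable {V : Type*} {G : SimpleGraph V} {ℓ : ℕ} {v : Fin ℓ → V}

theorem dist_induce_eq_of_twins (hconn : G.Connected) (hinj : Function.Injective v)
    (htwin : ∀ i j, G.neighborSet (v i) = G.neighborSet (v j)) {k : ℕ} (j : Fin ℓ)
    (hj : (j : ℕ) < k) : ∀ x y : {u : V | ∀ i : Fin ℓ, k ≤ (i : ℕ) → u ≠ v i},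
    (G.induce {u : V | ∀ i : Fin ℓ, k ≤ (i : ℕ) → u ≠ v i}).dist x y = G.dist x y := by
  set S := {u : V | ∀ i : Fin ℓ, k ≤ (i : ℕ) → u ≠ v i}
  have hvj : v j ∈ S := fun i hi h => by have := hinj h; omega
  have hD : ∀ x ∈ Sᶜ, G.neighborSet x = G.neighborSet (v j) := fun x hx => by
    obtain ⟨i, -, rfl⟩ : ∃ i : Fin ℓ, k ≤ (i : ℕ) ∧ x = v i := by simpa [S] using hx
    exact htwin i j
  refine fun x y => dist_induce_eq_of_retraction (collapseTwins Sᶜ (v j) hD) (fun z => ?_)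
    (fun z hz => if_neg (not_not_intro hz)) (hconn x y)
  rw [collapseTwins, RelHom.coeFn_mk]
  split_ifs with hz
  exacts [hvj, not_not.1 hz]

theorem exists_iso_forall_ne_of_twins (hinj : Function.Injective v)
    (htwin : ∀ i j, G.neighborSet (v i) = G.neighborSet (v j)) {k : ℕ} (hk : k ≤ ℓ)
    (Q : Finset V) (hQ : Q.card ≤ k) :
    ∃ σ : G ≃g G, ∀ p ∈ Q, ∀ i : Fin ℓ, k ≤ (i : ℕ) → σ p ≠ v i := by
  classical
  let I := Finset.univ.filter fun i => v i ∈ Q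
  let K := Finset.univ.filter fun i : Fin ℓ => (i : ℕ) < k
  have hIK : I.card ≤ K.card := by
    have hI : I.card ≤ Q.card :=
      Finset.card_le_card_of_injOn v (fun i hi => (Finset.mem_filter.1 hi).2) hinj.injOn
    have hK : K.card = k := by simp [K, Fin.card_filter_val_lt, hk]
    omega
  obtain ⟨τ, hτ⟩ := Equiv.Perm.exists_forall_mem_of_card_le hIK
  let e : Fin ℓ ↪ V := ⟨v, hinj⟩
  refine ⟨Iso.ofPermTwins (Set.range v) (by rintro _ ⟨i, rfl⟩ _ ⟨j, rfl⟩; exact htwin i j)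
    (τ.viaFintypeEmbedding e) (fun x hx => τ.viaFintypeEmbedding_apply_notMem_range e hx),
    fun p hp i hi => ?_⟩
  show τ.viaFintypeEmbedding e p ≠ v i
  by_cases hpv : p ∈ Set.range v
  · obtain ⟨j, rfl⟩ := hpv
    have hτj : (τ j : ℕ) < k := by simpa [K] using hτ j (by simpa [I] using hp)
    rw [show v j = e j from rfl, τ.viaFintypeEmbedding_apply_image]
    exact fun h => by have := hinj h; omega
  · rw [τ.viaFintypeEmbedding_apply_notMem_range e hpv]
    exact fun h => hpv ⟨i, h.symm⟩

end SimpleGraph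

open SimpleGraph

theorem hyperbolicity_delete_extra_twins_general {V : Type*} (G : SimpleGraph V)
    (hconn : G.Connected) (ℓ : ℕ) (hℓ : 4 < ℓ) (v : Fin ℓ → V)
    (hinj : Function.Injective v)
    (htwin : ∀ i j : Fin ℓ, G.neighborSet (v i) = G.neighborSet (v j)) :
    hyperbolicity (G.induce {u : V | ∀ i : Fin ℓ, 4 ≤ (i : ℕ) → u ≠ v i}) =
      hyperbolicity G := by
  classical
  refine hyperbolicity_induce_eq
    (dist_induce_eq_of_twins hconn hinj htwin ⟨0, by omega⟩ (by simp)) fun a b c d => ?_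
  obtain ⟨σ, hσ⟩ := exists_iso_forall_ne_of_twins hinj htwin hℓ.le {a, b, c, d}
    Finset.card_le_four
  exact ⟨σ, hσ a (by simp), hσ b (by simp), hσ c (by simp), hσ d (by simp)⟩

/-- Given more than four distinct vertices v_1, ..., v_ℓ with pairwise equal open
neighborhoods, deleting all but the first four of them does not change the hyperbolicity. -/
theorem hyperbolicity_delete_extra_twins {V : Type*} [Fintype V] (G : SimpleGraph V)
    (hconn : G.Connected) (ℓ : ℕ) (hℓ : 4 < ℓ) (v : Fin ℓ → V)
    (hinj : Function.Injective v)
    (htwin : ∀ i j : Fin ℓ, G.neighborSet (v i) = G.neighborSet (v j)) :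
    hyperbolicity (G.induce {u : V | ∀ i : Fin ℓ, 4 ≤ (i : ℕ) → u ≠ v i}) =
      hyperbolicity G :=
  hyperbolicity_delete_extra_twins_general G hconn ℓ hℓ v hinj htwin
end

section
/- Let G = (V,E) be a simple graph with a vertex cover W of size at most k, and suppose that no five distinct vertices of G have pairwise equal open neighborhoods. Then |V| ≤ k + 4·2^k and |E| ≤ 4k·2^k. -/
/-!
A vertex outside the cover `W` has all its neighbours in `W`, so its neighbourhood is one of the
`2 ^ #W` subsets of `W`, and by hypothesis at most four vertices share each such neighbourhood.
This bounds the vertices outside `W`. For the edges, count degrees: the vertices outside `W`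
contribute at most `4 ∑_{S ⊆ W} #S = 2 #W 2 ^ #W`, those of `W` at most `#W` times the number of
vertices, and the handshake lemma turns the degree sum into twice the number of edges.
-/

open Finset

namespace Finset

variable {α β M : Type*}

theorem two_mul_sum_card_powerset (s : Finset α) :
    2 * ∑ t ∈ s.powerset, #t = #s * 2 ^ #s := by
  classical
  have hcompl : ∑ t ∈ s.powerset, #(s \ t) = ∑ t ∈ s.powerset, #t :=
    sum_nbij' (s \ ·) (s \ ·) (by simp) (by simp)
      (fun t ht => sdiff_sdiff_eq_self (mem_powerset.1 ht))
      (fun t ht => sdiff_sdiff_eq_self (mem_powerset.1 ht)) (fun _ _ => rfl)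
  calc 2 * ∑ t ∈ s.powerset, #t = ∑ t ∈ s.powerset, (#(s \ t) + #t) := by
        rw [sum_add_distrib, hcompl, two_mul]
    _ = ∑ _t ∈ s.powerset, #s :=
        sum_congr rfl fun t ht => card_sdiff_add_card_eq_card (mem_powerset.1 ht)
    _ = #s * 2 ^ #s := by rw [sum_const, card_powerset, smul_eq_mul, mul_comm]

theorem sum_comp_le_nsmul_sum_of_maps_to [DecidableEq β] [AddCommMonoid M] [PartialOrder M]
    [IsOrderedAddMonoid M] {f : α → β} {s : Finset α} {t : Finset β} (hf : ∀ a ∈ s, f a ∈ t)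
    {g : β → M} (hg : ∀ b ∈ t, 0 ≤ g b) (n : ℕ) (hn : ∀ b ∈ t, #{a ∈ s | f a = b} ≤ n) :
    ∑ a ∈ s, g (f a) ≤ n • ∑ b ∈ t, g b :=
  calc ∑ a ∈ s, g (f a) = ∑ b ∈ t, ∑ a ∈ s with f a = b, g (f a) :=
        (sum_fiberwise_of_maps_to hf _).symm
    _ = ∑ b ∈ t, #{a ∈ s | f a = b} • g b :=
        sum_congr rfl fun b _ => by
          rw [sum_congr rfl fun a ha => congrArg g (mem_filter.1 ha).2, sum_const]
    _ ≤ ∑ b ∈ t, n • g b := sum_le_sum fun b hb => nsmul_le_nsmul_left (hg b hb) (hn b hb)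
    _ = n • ∑ b ∈ t, g b := (smul_sum ..).symm

end Finset

namespace SimpleGraph

variable {V : Type*} [Fintype V] (G : SimpleGraph V) [DecidableRel G.Adj] {W : Finset V} {m : ℕ}

theorem neighborFinset_subset_of_notMem (hvc : ∀ u w : V, G.Adj u w → u ∈ W ∨ w ∈ W) {v : V}
    (hv : v ∉ W) : G.neighborFinset v ⊆ W := fun w hw =>
  (hvc v w ((G.mem_neighborFinset v w).1 hw)).resolve_left hv

variable [DecidableEq V]

theorem card_filter_neighborFinset_eq_le
    (htwins : ∀ s : Finset V,
      (∀ u ∈ s, ∀ w ∈ s, G.neighborSet u = G.neighborSet w) → s.card ≤ m)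
    (s N : Finset V) : #{v ∈ s | G.neighborFinset v = N} ≤ m :=
  htwins _ fun u hu w hw => by
    rw [mem_filter] at hu hw
    exact Set.toFinset_inj.1 (hu.2.trans hw.2.symm)

variable (hvc : ∀ u w : V, G.Adj u w → u ∈ W ∨ w ∈ W)
  (htwins : ∀ s : Finset V,
    (∀ u ∈ s, ∀ w ∈ s, G.neighborSet u = G.neighborSet w) → s.card ≤ m)
include hvc htwins

theorem card_compl_le_mul_two_pow : #Wᶜ ≤ m * 2 ^ #W := by
  rw [← card_powerset]
  exact card_le_mul_card_image_of_maps_to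
    (fun v hv => mem_powerset.2 (G.neighborFinset_subset_of_notMem hvc (mem_compl.1 hv))) m
    (fun N _ => G.card_filter_neighborFinset_eq_le htwins _ N)

theorem two_mul_sum_degree_compl_le : 2 * ∑ v ∈ Wᶜ, G.degree v ≤ m * (#W * 2 ^ #W) := by
  have hsum : ∑ v ∈ Wᶜ, #(G.neighborFinset v) ≤ m • ∑ N ∈ W.powerset, #N :=
    sum_comp_le_nsmul_sum_of_maps_to
      (fun v hv => mem_powerset.2 (G.neighborFinset_subset_of_notMem hvc (mem_compl.1 hv)))
      (fun _ _ => Nat.zero_le _) m (fun N _ => G.card_filter_neighborFinset_eq_le htwins _ N)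
  rw [smul_eq_mul] at hsum
  calc 2 * ∑ v ∈ Wᶜ, G.degree v ≤ m * (2 * ∑ N ∈ W.powerset, #N) := by
        simp only [← card_neighborFinset_eq_degree]; linarith
    _ = m * (#W * 2 ^ #W) := by rw [two_mul_sum_card_powerset]

end SimpleGraph

/-- A graph with a vertex cover of size at most k in which no five vertices have pairwise
equal open neighborhoods has at most k + 4·2^k vertices and at most 4k·2^k edges. -/
theorem kernel_size_vertex_cover {V : Type*} [Fintype V] [DecidableEq V]
    (G : SimpleGraph V) [DecidableRel G.Adj] (k : ℕ) (W : Finset V)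
    (hWcard : W.card ≤ k)
    (hvc : ∀ u w : V, G.Adj u w → u ∈ W ∨ w ∈ W)
    (htwins : ∀ s : Finset V,
      (∀ u ∈ s, ∀ w ∈ s, G.neighborSet u = G.neighborSet w) → s.card ≤ 4) :
    Fintype.card V ≤ k + 4 * 2 ^ k ∧ G.edgeFinset.card ≤ 4 * k * 2 ^ k := by
  have hpow : 2 ^ #W ≤ 2 ^ k := Nat.pow_le_pow_right two_pos hWcard
  have hk : k ≤ 2 ^ k := Nat.lt_two_pow_self.le
  have hV : Fintype.card V ≤ k + 4 * 2 ^ k := by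
    have := G.card_compl_le_mul_two_pow hvc htwins
    rw [← card_add_card_compl W]
    omega
  refine ⟨hV, ?_⟩
  have hdegW : ∑ v ∈ W, G.degree v ≤ k * (k + 4 * 2 ^ k) :=
    calc ∑ v ∈ W, G.degree v ≤ #W • Fintype.card V :=
          sum_le_card_nsmul _ _ _ fun v _ => (G.degree_lt_card_verts v).le
      _ ≤ k * (k + 4 * 2 ^ k) := by rw [smul_eq_mul]; gcongr
  have hdegWc : 2 * ∑ v ∈ Wᶜ, G.degree v ≤ 4 * (k * 2 ^ k) :=
    (G.two_mul_sum_degree_compl_le hvc htwins).trans (by gcongr)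
  have handshake : 2 * #G.edgeFinset = ∑ v ∈ W, G.degree v + ∑ v ∈ Wᶜ, G.degree v := by
    rw [sum_add_sum_compl, G.sum_degrees_eq_twice_card_edges]
  nlinarith
end

section
/- Let G = (V,E) be a simple graph with minimum degree at least two and let X ⊆ E with |X| = k be a feedback edge set of G, i.e., the graph G − X obtained by deleting the edges of X is a forest. Then G has at most 7k maximal paths. -/
/-- A maximal path: a path on at least two vertices (at least one edge) all of whose inner
vertices have degree exactly two in G, whose endpoints each have degree at least three or
exactly two in G but not both degree two, and which cannot be extended at a degree-two
endpoint. -/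
def IsMaximalPath {V : Type*} (G : SimpleGraph V) {u v : V} (p : G.Walk u v) : Prop :=
  p.IsPath ∧ 1 ≤ p.length ∧
  (∀ w ∈ p.support, w ≠ u → w ≠ v → deg G w = 2) ∧
  ((3 ≤ deg G u ∧ 3 ≤ deg G v) ∨ (3 ≤ deg G u ∧ deg G v = 2) ∨
    (deg G u = 2 ∧ 3 ≤ deg G v)) ∧
  (deg G u = 2 → ∀ x : V, G.Adj u x → x ∈ p.support) ∧
  (deg G v = 2 → ∀ x : V, G.Adj v x → x ∈ p.support)

/-- The set of maximal paths of G, where each (undirected) maximal path is represented by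
its set of edges. -/
def maximalPathEdgeSets {V : Type*} (G : SimpleGraph V) : Set (Set (Sym2 V)) :=
  {s | ∃ (u v : V) (p : G.Walk u v), IsMaximalPath G p ∧ s = {e | e ∈ p.edges}}

/-!
Send each maximal path to the dart by which it leaves an endpoint of degree at least three. As all
inner vertices have degree two, the path can be followed from that dart in only one way, so there
are at most `∑_{deg v ≥ 3} deg v ≤ 3 ∑_v (deg v - 2) = 6 (|E| - |V|)` maximal paths. Since `G - X`
is a forest, `|E| ≤ |V| - 1 + k`.
-/

open Finset SimpleGraph

theorem Set.ncard_le_ncard_of_rel {α β : Type*} {A : Set α} {D : Set β} [Finite D]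
    (r : α → β → Prop) (hex : ∀ a ∈ A, ∃ d ∈ D, r a d)
    (huniq : ∀ d a a', r a d → r a' d → a = a') : A.ncard ≤ D.ncard := by
  choose f hfD hfr using hex
  rw [← Nat.card_coe_set_eq, ← Nat.card_coe_set_eq]
  refine Nat.card_le_card_of_injective (fun a ↦ ⟨f a a.2, hfD a a.2⟩) fun a a' h ↦ ?_
  have hfa' : r a' (f a a.2) := by
    rw [show f a a.2 = f a' a'.2 from congrArg Subtype.val h]; exact hfr a' a'.2
  exact Subtype.ext (huniq _ _ _ (hfr a a.2) hfa')

namespace SimpleGraph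

variable {V : Type*} {G : SimpleGraph V}

theorem deg_eq_degree (G : SimpleGraph V) (w : V) [Fintype (G.neighborSet w)] :
    deg G w = G.degree w := by
  rw [deg, Set.ncard_eq_toFinset_card', Set.toFinset_card, card_neighborSet_eq_degree]

theorem eq_of_adj_of_deg_eq_two {x y z w : V} (hx : deg G x = 2) (hy : G.Adj x y)
    (hz : G.Adj x z) (hw : G.Adj x w) (hyw : y ≠ w) (hzw : z ≠ w) : y = z := by
  obtain ⟨a, b, -, hab⟩ := Set.ncard_eq_two.mp hx
  have hy' : y ∈ G.neighborSet x := hy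
  have hz' : z ∈ G.neighborSet x := hz
  have hw' : w ∈ G.neighborSet x := hw
  rw [hab] at hy' hz' hw'
  simp only [Set.mem_insert_iff, Set.mem_singleton_iff] at hy' hz' hw'
  grind

namespace Walk

theorem getVert_eq_of_snd_eq {u v v' : V} {p : G.Walk u v} {q : G.Walk u v'}
    (hp : p.IsPath) (hq : q.IsPath) (hsnd : p.snd = q.snd)
    (hdeg : ∀ i, 0 < i → i < p.length → deg G (p.getVert i) = 2) :
    ∀ i ≤ p.length, i ≤ q.length → p.getVert i = q.getVert i := by
  intro i
  induction i using Nat.strong_induction_on with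
  | _ i ih =>
  match i with
  | 0 => simp
  | 1 => exact fun _ _ ↦ hsnd
  | i + 2 =>
    intro hip hiq
    have hprev := ih i (by omega) (by omega) (by omega)
    have hcur := ih (i + 1) (by omega) (by omega) (by omega)
    refine eq_of_adj_of_deg_eq_two (hdeg (i + 1) (by omega) (by omega))
      (p.adj_getVert_succ (by omega)) (hcur ▸ q.adj_getVert_succ (by omega))
      (p.adj_getVert_succ (by omega)).symm ?_ ?_
    · exact fun h ↦ absurd (hp.getVert_injOn (by simp; omega) (by simp; omega) h) (by omega)
    · rw [hprev]
      exact fun h ↦ absurd (hq.getVert_injOn (by simp; omega) (by simp; omega) h) (by omega)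

end Walk

theorem IsMaximalPath.reverse {u v : V} {p : G.Walk u v} (h : IsMaximalPath G p) :
    IsMaximalPath G p.reverse := by
  obtain ⟨hpath, hlen, hinner, hends, hu, hv⟩ := h
  simp only [IsMaximalPath, Walk.support_reverse, List.mem_reverse, Walk.length_reverse]
  exact ⟨hpath.reverse, hlen, fun w hw hwv hwu ↦ hinner w hw hwu hwv, by tauto, hv, hu⟩

theorem IsMaximalPath.deg_getVert {u v : V} {p : G.Walk u v} (h : IsMaximalPath G p) {i : ℕ}
    (hi₀ : 0 < i) (hi : i < p.length) : deg G (p.getVert i) = 2 :=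
  h.2.2.1 _ (p.getVert_mem_support i) (by rw [Ne, h.1.getVert_eq_start_iff hi.le]; omega)
    (by rw [Ne, h.1.getVert_eq_end_iff hi.le]; omega)

/-- A maximal path cannot be a proper initial segment of another one: its last vertex would be
an inner vertex of degree two whose neighbours all lie on the shorter path. -/
theorem IsMaximalPath.length_le_of_snd_eq {u v v' : V} {p : G.Walk u v} {q : G.Walk u v'}
    (hp : IsMaximalPath G p) (hq : IsMaximalPath G q) (hsnd : p.snd = q.snd) :
    q.length ≤ p.length := by
  by_contra! hlt
  have hagree := Walk.getVert_eq_of_snd_eq hp.1 hq.1 hsnd (fun i ↦ hp.deg_getVert)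
  have hend : q.getVert p.length = v := by simp [← hagree p.length le_rfl hlt.le]
  have hv : deg G v = 2 := hend ▸ hq.deg_getVert hp.2.1 hlt
  obtain ⟨j, hj, hjp⟩ := Walk.mem_support_iff_exists_getVert.mp <|
    hp.2.2.2.2.2 hv _ (hend ▸ q.adj_getVert_succ hlt)
  rw [hagree j hjp (by omega)] at hj
  have := hq.1.getVert_injOn (by simp; omega) (by simp; omega) hj
  omega

theorem IsMaximalPath.edges_eq_of_snd_eq {u v v' : V} {p : G.Walk u v} {q : G.Walk u v'}
    (hp : IsMaximalPath G p) (hq : IsMaximalPath G q) (hsnd : p.snd = q.snd) :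
    p.edges = q.edges := by
  have hlen := (hp.length_le_of_snd_eq hq hsnd).antisymm (hq.length_le_of_snd_eq hp hsnd.symm)
  have hagree := Walk.getVert_eq_of_snd_eq hp.1 hq.1 hsnd (fun i ↦ hp.deg_getVert)
  obtain rfl : v = v' := by
    have hend := hagree p.length le_rfl hlen.ge
    rwa [Walk.getVert_length, ← hlen, Walk.getVert_length] at hend
  rw [Walk.ext_getVert_le_length hlen.symm fun i hi ↦ hagree i hi (hlen ▸ hi)]

theorem IsMaximalPath.exists_three_le_deg_start {u v : V} {p : G.Walk u v}
    (hp : IsMaximalPath G p) : ∃ (u' v' : V) (p' : G.Walk u' v'), IsMaximalPath G p' ∧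
      3 ≤ deg G u' ∧ {e | e ∈ p'.edges} = {e | e ∈ p.edges} := by
  rcases hp.2.2.2.1 with ⟨hu, -⟩ | ⟨hu, -⟩ | ⟨-, hv⟩
  · exact ⟨u, v, p, hp, hu, rfl⟩
  · exact ⟨u, v, p, hp, hu, rfl⟩
  · exact ⟨v, u, p.reverse, hp.reverse, hv, by simp⟩

variable [Fintype V] [DecidableRel G.Adj]

theorem card_filter_dart_fst (P : V → Prop) [DecidablePred P] :
    #{d : G.Dart | P d.fst} = ∑ v with P v, G.degree v := by
  classical
  rw [card_eq_sum_card_fiberwise (f := fun d : G.Dart ↦ d.fst) (t := {v | P v}) fun d ↦ by simp]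
  refine sum_congr rfl fun v hv ↦ ?_
  rw [filter_filter, ← dart_fst_fiber_card_eq_degree]
  congr 1
  ext d
  simp only [mem_filter, mem_univ, true_and, and_iff_right_iff_imp]
  rintro rfl
  simpa using hv

/-- Every maximal path leaves a vertex of degree at least three along a dart, and by
`IsMaximalPath.edges_eq_of_snd_eq` that dart determines it. -/
theorem ncard_maximalPathEdgeSets_le :
    (maximalPathEdgeSets G).ncard ≤ ∑ v with 3 ≤ G.degree v, G.degree v := by
  rw [← card_filter_dart_fst, ← Set.ncard_coe_finset]
  refine Set.ncard_le_ncard_of_rel (fun s (d : G.Dart) ↦ ∃ (v : V) (p : G.Walk d.fst v),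
    IsMaximalPath G p ∧ p.snd = d.snd ∧ s = {e | e ∈ p.edges}) ?_ ?_
  · rintro s ⟨u, v, p, hp, rfl⟩
    obtain ⟨u', v', p', hp', hu', hedges⟩ := hp.exists_three_le_deg_start
    have hnil : ¬ p'.Nil := Walk.not_nil_iff_lt_length.mpr hp'.2.1
    refine ⟨⟨(u', p'.snd), p'.adj_snd hnil⟩, ?_, v', p', hp', rfl, hedges.symm⟩
    simpa [← deg_eq_degree] using hu'
  · rintro d s s' ⟨v, p, hp, hpd, rfl⟩ ⟨v', q, hq, hqd, rfl⟩
    rw [hp.edges_eq_of_snd_eq hq (hpd.trans hqd.symm)]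

theorem sum_degree_filter_add_le (hmin : ∀ v, 2 ≤ G.degree v) :
    ∑ v with 3 ≤ G.degree v, G.degree v + 6 * Fintype.card V ≤ 6 * #G.edgeFinset := by
  have hpoint : ∀ v, (if 3 ≤ G.degree v then G.degree v else 0) + 6 ≤ 3 * G.degree v := by
    intro v
    have := hmin v
    split_ifs <;> omega
  calc ∑ v with 3 ≤ G.degree v, G.degree v + 6 * Fintype.card V
      = ∑ v, ((if 3 ≤ G.degree v then G.degree v else 0) + 6) := by
        rw [sum_filter, sum_add_distrib, sum_const, card_univ, smul_eq_mul, mul_comm]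
    _ ≤ ∑ v, 3 * G.degree v := sum_le_sum fun v _ ↦ hpoint v
    _ = 6 * #G.edgeFinset := by rw [← mul_sum, sum_degrees_eq_twice_card_edges]; ring

theorem IsAcyclic.card_edgeFinset_le (hG : G.IsAcyclic) :
    #G.edgeFinset ≤ Fintype.card V - 1 := by
  rcases isEmpty_or_nonempty V with hV | hV
  · simp [Finset.eq_empty_of_isEmpty]
  classical
  obtain ⟨T, hGT, -, hT⟩ := connected_top.exists_isTree_le_of_le_of_isAcyclic le_top hG
  have := hT.card_edgeFinset
  have : #G.edgeFinset ≤ #T.edgeFinset := card_le_card (edgeFinset_mono hGT)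
  omega

theorem card_edgeFinset_le_card_edgeFinset_deleteEdges_add [DecidableEq V] (X : Finset (Sym2 V))
    [DecidableRel (G.deleteEdges X).Adj] :
    #G.edgeFinset ≤ #(G.deleteEdges X).edgeFinset + #X := by
  rw [edgeFinset_deleteEdges]
  exact card_le_card_sdiff_add_card

end SimpleGraph

theorem maximalPath_count_le_of_feedback_edge_set_general {V : Type*} [Fintype V]
    (G : SimpleGraph V) (hmin : ∀ w : V, 2 ≤ deg G w) (k : ℕ)
    (X : Finset (Sym2 V)) (hXcard : X.card = k)
    (hforest : (G.deleteEdges ↑X).IsAcyclic) :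
    (maximalPathEdgeSets G).ncard ≤ 7 * k := by
  classical
  have hpaths := ncard_maximalPathEdgeSets_le (G := G)
  have hdeg := sum_degree_filter_add_le fun v ↦ deg_eq_degree G v ▸ hmin v
  have hforestEdges := hforest.card_edgeFinset_le
  have hedges := card_edgeFinset_le_card_edgeFinset_deleteEdges_add (G := G) X
  omega

/-- A graph with minimum degree at least two having a feedback edge set of size k has at
most 7k maximal paths. -/
theorem maximalPath_count_le_of_feedback_edge_set {V : Type*} [Fintype V]
    (G : SimpleGraph V) (hmin : ∀ w : V, 2 ≤ deg G w) (k : ℕ)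
    (X : Finset (Sym2 V)) (hXsub : ↑X ⊆ G.edgeSet) (hXcard : X.card = k)
    (hforest : (G.deleteEdges ↑X).IsAcyclic) :
    (maximalPathEdgeSets G).ncard ≤ 7 * k :=
  maximalPath_count_le_of_feedback_edge_set_general G hmin k X hXcard hforest
end

section
/- Let H be a simple graph and let H' be obtained from H by inserting one new edge {u,v} (where u and v are vertices of H). Then the number of maximal paths of H' is at most the number of maximal paths of H plus five. -/
/-!
A maximal path of `H ⊔ edge u v` which is not one of `H` either uses the new edge, or avoids it
and then fails to be maximal in `H` only because of the changed degree at `u` or `v`; this forces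
it to start at `u` (or `v`), of degree at most two in `H`, along an edge of `H`. Since a maximal
path can be continued in only one way through a vertex of degree two, it is determined by its
first edge, so there are at most `min (deg H u) 2` such paths at `u`, and `min (deg H v) 2` at
`v`. At most two maximal paths use a given edge, and at most one if an end of the edge does not
have degree two. So the new paths number at most `2 + 1 + 2` when `deg H u = 1`, and `1 + 2 + 2`
otherwise.
-/

lemma Set.ncard_biUnion_le_of_subsingleton {ι α : Type*} {S : Set ι} (hS : S.Finite)
    {f : ι → Set α} (hf : ∀ i, (f i).Subsingleton) : (⋃ i ∈ S, f i).ncard ≤ S.ncard := by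
  induction S, hS using Set.Finite.induction_on with
  | empty => simp
  | @insert i S hi hS ih =>
    rw [Set.biUnion_insert, Set.ncard_insert_of_notMem hi hS]
    calc _ ≤ (f i).ncard + (⋃ j ∈ S, f j).ncard := Set.ncard_union_le _ _
      _ ≤ 1 + S.ncard := add_le_add ((Set.ncard_le_one (hf i).finite).mpr (hf i)) ih
      _ = S.ncard + 1 := add_comm _ _

namespace MaximalPaths

open SimpleGraph

variable {V : Type*}

def listEdges (l : List V) : Set (Sym2 V) :=
  {e | ∃ a b, e = s(a, b) ∧ [a, b] <:+: l}

lemma listEdges_singleton (a : V) : listEdges [a] = ∅ := by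
  ext e
  simp only [listEdges, Set.mem_ofPred_eq, Set.mem_empty_iff_false, iff_false, not_exists, not_and]
  intro x y _ h
  simpa using h.length_le

lemma listEdges_cons_cons (a b : V) (l : List V) :
    listEdges (a :: b :: l) = insert s(a, b) (listEdges (b :: l)) := by
  ext e
  simp only [listEdges, Set.mem_ofPred_eq, Set.mem_insert_iff, List.infix_cons_iff (l₂ := b :: l),
    List.cons_prefix_cons, List.nil_prefix, and_true]
  constructor
  · rintro ⟨x, y, rfl, ⟨rfl, rfl⟩ | h⟩
    · exact Or.inl rfl
    · exact Or.inr ⟨x, y, rfl, h⟩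
  · rintro (rfl | ⟨x, y, rfl, h⟩)
    · exact ⟨a, b, rfl, Or.inl ⟨rfl, rfl⟩⟩
    · exact ⟨x, y, rfl, Or.inr h⟩

lemma listEdges_reverse (l : List V) : listEdges l.reverse = listEdges l := by
  suffices h : ∀ l : List V, listEdges l.reverse ⊆ listEdges l from
    (h l).antisymm (by simpa using h l.reverse)
  rintro l _ ⟨a, b, rfl, h⟩
  exact ⟨b, a, Sym2.eq_swap, by simpa using List.reverse_infix.mpr h⟩

lemma setOf_mem_edges_eq_listEdges {G : SimpleGraph V} {a b : V} (p : G.Walk a b) :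
    {e | e ∈ p.edges} = listEdges p.support := by
  induction p with
  | nil => simp [listEdges_singleton]
  | cons h q ih =>
    rw [Walk.edges_cons, Walk.support_cons, ← q.cons_tail_support, listEdges_cons_cons,
      q.cons_tail_support, ← ih]
    ext; simp

lemma eq_of_adj_of_deg_eq_two {G : SimpleGraph V} {w x y z : V} (hw : deg G w = 2)
    (hx : G.Adj w x) (hy : G.Adj w y) (hz : G.Adj w z) (hyx : y ≠ x) (hzx : z ≠ x) : y = z := by
  have hN : {x, y} = G.neighborSet w :=
    Set.eq_of_subset_of_ncard_le (by rintro _ (rfl | rfl) <;> assumption)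
      (by rw [Set.ncard_pair hyx.symm]; exact hw.le)
      (Set.finite_of_ncard_ne_zero (by rw [← deg, hw]; simp))
  obtain rfl | rfl : z ∈ ({x, y} : Set V) := hN ▸ hz
  · exact absurd rfl hzx
  · rfl

/-- Vertex-list form of `IsMaximalPath`, keeping of the condition on the degrees of the ends only
that they are not both two. -/
structure IsMaximalPathList (G : SimpleGraph V) (a b : V) (l : List V) : Prop where
  isChain : l.IsChain G.Adj
  nodup : l.Nodup
  head?_eq : l.head? = some a
  getLast?_eq : l.getLast? = some b
  two_le_length : 2 ≤ l.length
  deg_inner : ∀ w ∈ l, w ≠ a → w ≠ b → deg G w = 2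
  not_deg_ends_eq_two : ¬(deg G a = 2 ∧ deg G b = 2)
  mem_of_adj_head : deg G a = 2 → ∀ x, G.Adj a x → x ∈ l
  mem_of_adj_last : deg G b = 2 → ∀ x, G.Adj b x → x ∈ l

lemma _root_.IsMaximalPath.isMaximalPathList {G : SimpleGraph V} {a b : V} {p : G.Walk a b}
    (h : IsMaximalPath G p) : IsMaximalPathList G a b p.support := by
  obtain ⟨hpath, hlen, hinner, hends, hclosA, hclosB⟩ := h
  refine ⟨p.isChain_adj_support, hpath.support_nodup, ?_, ?_, ?_, hinner, ?_, hclosA, hclosB⟩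
  · rw [List.head?_eq_some_head p.support_ne_nil, p.head_support]
  · rw [List.getLast?_eq_some_getLast p.support_ne_nil, p.getLast_support]
  · rw [Walk.length_support]; omega
  · rcases hends with h | h | h <;> omega

namespace IsMaximalPathList

variable {G : SimpleGraph V} {a b u v : V} {l : List V}

lemma reverse (h : IsMaximalPathList G a b l) : IsMaximalPathList G b a l.reverse where
  isChain := List.isChain_reverse.mpr (h.isChain.imp fun _ _ hxy => hxy.symm)
  nodup := List.nodup_reverse.mpr h.nodup
  head?_eq := by simpa using h.getLast?_eq
  getLast?_eq := by simpa using h.head?_eq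
  two_le_length := by simpa using h.two_le_length
  deg_inner w hw hwb hwa := h.deg_inner w (List.mem_reverse.mp hw) hwa hwb
  not_deg_ends_eq_two := fun ⟨hb, ha⟩ => h.not_deg_ends_eq_two ⟨ha, hb⟩
  mem_of_adj_head hb x hx := List.mem_reverse.mpr (h.mem_of_adj_last hb x hx)
  mem_of_adj_last ha x hx := List.mem_reverse.mpr (h.mem_of_adj_head ha x hx)

lemma adj (h : IsMaximalPathList G a b l) {x y : V} (hxy : [x, y] <:+: l) : G.Adj x y :=
  List.isChain_pair.mp (h.isChain.infix hxy)

lemma ne_of_infix (h : IsMaximalPathList G a b l) {x y z : V} (hxyz : [x, y, z] <:+: l) :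
    x ≠ z := by
  have := h.nodup.sublist hxyz.sublist
  simp_all

lemma eq_cons_cons (h : IsMaximalPathList G a b l) : ∃ x t, l = a :: x :: t := by
  match l, h.head?_eq, h.two_le_length with
  | _ :: x :: t, rfl, _ => exact ⟨x, t, rfl⟩

lemma deg_eq_two (h : IsMaximalPathList G a b l) {p w y : V} (hpwy : [p, w, y] <:+: l) :
    deg G w = 2 := by
  obtain ⟨l₁, l₂, rfl⟩ := hpwy
  rw [show l₁ ++ [p, w, y] ++ l₂ = (l₁ ++ [p]) ++ w :: y :: l₂ by simp] at h
  have ha : a ∈ l₁ ++ [p] := by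
    have := h.head?_eq
    rw [List.head?_append_of_ne_nil _ (by simp)] at this
    exact List.mem_of_mem_head? this
  have hb : b ∈ y :: l₂ := by
    have := h.getLast?_eq
    rw [← List.singleton_append, ← List.append_assoc,
      List.getLast?_append_of_ne_nil _ (by simp)] at this
    exact List.mem_of_mem_getLast? this
  have hnd := List.nodup_append.mp h.nodup
  refine h.deg_inner w (by simp) ?_ ?_
  · rintro rfl; exact hnd.2.2 _ ha _ (List.mem_cons_self ..) rfl
  · rintro rfl; exact (List.nodup_cons.mp hnd.2.1).1 hb

lemma mem_listEdges_of_adj (h : IsMaximalPathList G a b l) {p w y z : V}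
    (hpwy : [p, w, y] <:+: l) (hz : G.Adj w z) : s(w, z) ∈ listEdges l := by
  have hpw : [p, w] <:+: l := (List.prefix_append [p, w] [y]).isInfix.trans hpwy
  have hwy : [w, y] <:+: l := (List.suffix_append [p] [w, y]).isInfix.trans hpwy
  by_cases hzp : z = p
  · exact ⟨p, w, hzp ▸ Sym2.eq_swap, hpw⟩
  · obtain rfl := eq_of_adj_of_deg_eq_two (h.deg_eq_two hpwy) (h.adj hpw).symm (h.adj hwy) hz
      (h.ne_of_infix hpwy).symm hzp
    exact ⟨w, y, rfl, hwy⟩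

lemma eq_or_eq_of_adj_of_notMem (h : IsMaximalPathList G a b l) {w z : V} (hw : w ∈ l)
    (hz : G.Adj w z) (hwz : s(w, z) ∉ listEdges l) : w = a ∨ w = b := by
  by_contra! hab
  obtain ⟨l₁, l₂, rfl⟩ := List.append_of_mem hw
  have h₁ : l₁ ≠ [] := by
    rintro rfl
    exact hab.1 (by simpa using h.head?_eq)
  have h₂ : l₂ ≠ [] := by
    rintro rfl
    exact hab.2 (by simpa using h.getLast?_eq)
  obtain ⟨l₁, p, rfl⟩ := List.eq_nil_or_concat l₁ |>.resolve_left h₁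
  obtain ⟨y, l₂, rfl⟩ := List.exists_cons_of_ne_nil h₂
  exact hwz (h.mem_listEdges_of_adj (p := p) (y := y) ⟨l₁, l₂, by simp⟩ hz)

lemma exists_eq_cons_cons_of_eq_or_eq (h : IsMaximalPathList G a b l) {w : V}
    (hw : w = a ∨ w = b) : ∃ b' x t, IsMaximalPathList G w b' (w :: x :: t) ∧
      listEdges (w :: x :: t) = listEdges l := by
  rcases hw with rfl | rfl
  · obtain ⟨x, t, rfl⟩ := h.eq_cons_cons
    exact ⟨b, x, t, h, rfl⟩
  · obtain ⟨x, t, ht⟩ := h.reverse.eq_cons_cons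
    exact ⟨a, x, t, ht ▸ h.reverse, by rw [← ht, listEdges_reverse]⟩

/-- Through a vertex of degree two a maximal path can only be continued one way. -/
lemma prefix_or_prefix {a' b' p y : V} {l₁ l₂ t₁ t₂ : List V}
    (h₁ : IsMaximalPathList G a b (l₁ ++ p :: y :: t₁))
    (h₂ : IsMaximalPathList G a' b' (l₂ ++ p :: y :: t₂)) : t₁ <+: t₂ ∨ t₂ <+: t₁ := by
  induction t₁ generalizing l₁ l₂ p y t₂ with
  | nil => exact Or.inl List.nil_prefix
  | cons n₁ t₁ ih =>
    cases t₂ with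
    | nil => exact Or.inr List.nil_prefix
    | cons n₂ t₂ =>
      have hy := h₁.deg_eq_two (p := p) (w := y) (y := n₁) ⟨l₁, t₁, by simp⟩
      obtain rfl : n₁ = n₂ := eq_of_adj_of_deg_eq_two hy (h₁.adj ⟨l₁, n₁ :: t₁, by simp⟩).symm
        (h₁.adj ⟨l₁ ++ [p], t₁, by simp⟩) (h₂.adj ⟨l₂ ++ [p], t₂, by simp⟩)
        (h₁.ne_of_infix (x := p) (y := y) (z := n₁) ⟨l₁, t₁, by simp⟩).symm
        (h₂.ne_of_infix (x := p) (y := y) (z := n₂) ⟨l₂, t₂, by simp⟩).symm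
      simpa using ih (l₁ := l₁ ++ [p]) (l₂ := l₂ ++ [p]) (by simpa using h₁) (by simpa using h₂)

lemma not_append_cons (h : IsMaximalPathList G a b l) {a' b' n : V} {r : List V}
    (h' : IsMaximalPathList G a' b' (l ++ n :: r)) : False := by
  obtain ⟨p, t, ht⟩ := h.reverse.eq_cons_cons
  obtain rfl : l = t.reverse ++ [p, b] := by simpa using congrArg List.reverse ht
  have hb := h'.deg_eq_two (p := p) (w := b) (y := n) ⟨t.reverse, r, by simp⟩
  have hn := h.mem_of_adj_last hb n (h'.adj ⟨t.reverse ++ [p], r, by simp⟩)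
  exact (List.nodup_append.mp h'.nodup).2.2 _ hn _ (List.mem_cons_self ..) rfl

lemma tail_eq {a' b' p y : V} {l t₁ t₂ : List V} (h₁ : IsMaximalPathList G a b (l ++ p :: y :: t₁))
    (h₂ : IsMaximalPathList G a' b' (l ++ p :: y :: t₂)) : t₁ = t₂ := by
  rcases prefix_or_prefix h₁ h₂ with ⟨r, rfl⟩ | ⟨r, rfl⟩
  · cases r with
    | nil => simp
    | cons n r => exact (h₁.not_append_cons (n := n) (r := r) (by simpa using h₂)).elim
  · cases r with
    | nil => simp
    | cons n r => exact (h₂.not_append_cons (n := n) (r := r) (by simpa using h₁)).elim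

lemma deg_eq_two_of_append_cons {a₁ b₁ a₂ b₂ c : V} {h t₁ t₂ q : List V}
    (h₁ : IsMaximalPathList G a₁ b₁ (h ++ u :: v :: t₁))
    (h₂ : IsMaximalPathList G a₂ b₂ (q ++ c :: h ++ u :: v :: t₂)) :
    deg G a₁ = 2 ∧ deg G b₂ = 2 := by
  have hcnot : c ∉ h ++ u :: v :: t₂ := by
    have := h₂.nodup
    rw [List.append_assoc, List.nodup_append, List.cons_append, List.nodup_cons] at this
    exact this.2.1.1
  obtain ⟨R, hR⟩ := List.head?_eq_some_iff.mp
    (by simpa [List.head?_append] using h₁.head?_eq : (h ++ u :: v :: t₂).head? = some a₁)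
  obtain ⟨y, R, rfl⟩ := List.exists_cons_of_ne_nil (l := R) (by
    rintro rfl
    have := congrArg List.length hR
    simp at this
    omega)
  have ha₁ : deg G a₁ = 2 := h₂.deg_eq_two (p := c) (w := a₁) (y := y) ⟨q, R, by simp [hR]⟩
  have hc : c ∈ h ++ u :: v :: t₁ :=
    h₁.mem_of_adj_head ha₁ c (h₂.adj (x := c) (y := a₁) ⟨q, y :: R, by simp [hR]⟩).symm
  have hct : c ∈ t₁ ∧ c ∉ t₂ := by
    simp only [List.mem_append, List.mem_cons, not_or] at hc hcnot
    tauto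
  obtain ⟨r, rfl⟩ : t₂ <+: t₁ :=
    (prefix_or_prefix h₁ (l₂ := q ++ c :: h) (by simpa using h₂)).resolve_left
      fun ht => hct.2 (ht.subset hct.1)
  obtain ⟨d, r, rfl⟩ := List.exists_cons_of_ne_nil (l := r) (by rintro rfl; simp_all)
  obtain ⟨L, hL⟩ := List.getLast?_eq_some_iff.mp
    (by simpa only [List.getLast?_append_of_ne_nil _ (List.cons_ne_nil _ _)]
      using h₂.getLast?_eq : (h ++ u :: v :: t₂).getLast? = some b₂)
  obtain ⟨L, x, rfl⟩ := List.eq_nil_or_concat L |>.resolve_left (by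
    rintro rfl
    have := congrArg List.length hL
    simp at this
    omega)
  refine ⟨ha₁, h₁.deg_eq_two (p := x) (w := b₂) (y := d) ⟨L, r, ?_⟩⟩
  rw [show h ++ u :: v :: (t₂ ++ d :: r) = (h ++ u :: v :: t₂) ++ d :: r by simp, hL]
  simp

lemma suffix_or_suffix {a₁ b₁ a₂ b₂ : V} {h₁ h₂ t₁ t₂ : List V}
    (m₁ : IsMaximalPathList G a₁ b₁ (h₁ ++ u :: v :: t₁))
    (m₂ : IsMaximalPathList G a₂ b₂ (h₂ ++ u :: v :: t₂)) : h₁ <:+ h₂ ∨ h₂ <:+ h₁ := by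
  simp only [← List.reverse_prefix]
  exact prefix_or_prefix (l₁ := t₁.reverse) (p := v) (y := u) (by simpa using m₁.reverse)
    (l₂ := t₂.reverse) (by simpa using m₂.reverse)

lemma exists_eq_append_cons_or {a₁ b₁ a₂ b₂ : V} {h₁ h₂ t₁ t₂ : List V}
    (m₁ : IsMaximalPathList G a₁ b₁ (h₁ ++ u :: v :: t₁))
    (m₂ : IsMaximalPathList G a₂ b₂ (h₂ ++ u :: v :: t₂))
    (hne : listEdges (h₁ ++ u :: v :: t₁) ≠ listEdges (h₂ ++ u :: v :: t₂)) :
    (∃ q c, h₂ = q ++ c :: h₁) ∨ (∃ q c, h₁ = q ++ c :: h₂) := by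
  have key : ∀ {h h' : List V}, h <:+ h' → h ≠ h' → ∃ q c, h' = q ++ c :: h := by
    rintro h _ ⟨q, rfl⟩ hne
    obtain ⟨q, c, rfl⟩ := q.eq_nil_or_concat.resolve_left (by rintro rfl; simp at hne)
    exact ⟨q, c, by simp⟩
  have hh : h₁ ≠ h₂ := by
    rintro rfl
    exact hne (by rw [tail_eq m₁ m₂])
  rcases suffix_or_suffix m₁ m₂ with hs | hs
  · exact Or.inl (key hs hh)
  · exact Or.inr (key hs hh.symm)

lemma false_of_eq_append_cons {a₁ b₁ a₂ b₂ a₃ b₃ : V} {h₁ h₂ h₃ t₁ t₂ t₃ : List V}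
    (m₁ : IsMaximalPathList G a₁ b₁ (h₁ ++ u :: v :: t₁))
    (m₂ : IsMaximalPathList G a₂ b₂ (h₂ ++ u :: v :: t₂))
    (m₃ : IsMaximalPathList G a₃ b₃ (h₃ ++ u :: v :: t₃))
    (h₁₂ : ∃ q c, h₂ = q ++ c :: h₁) (h₂₃ : ∃ q c, h₃ = q ++ c :: h₂) : False := by
  obtain ⟨_, _, rfl⟩ := h₁₂
  obtain ⟨_, _, rfl⟩ := h₂₃
  exact m₂.not_deg_ends_eq_two
    ⟨(deg_eq_two_of_append_cons m₂ m₃).1, (deg_eq_two_of_append_cons m₁ m₂).2⟩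

end IsMaximalPathList

section Counting

variable {G : SimpleGraph V}

def maximalPathsFrom (G : SimpleGraph V) (w x : V) : Set (Set (Sym2 V)) :=
  {s | ∃ b t, IsMaximalPathList G w b (w :: x :: t) ∧ s = listEdges (w :: x :: t)}

lemma maximalPathsFrom_subsingleton (G : SimpleGraph V) (w x : V) :
    (maximalPathsFrom G w x).Subsingleton := by
  rintro _ ⟨b₁, t₁, h₁, rfl⟩ _ ⟨b₂, t₂, h₂, rfl⟩
  rw [IsMaximalPathList.tail_eq (l := []) h₁ h₂]

def maximalPathsThrough (G : SimpleGraph V) (e : Sym2 V) : Set (Set (Sym2 V)) :=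
  {s ∈ maximalPathEdgeSets G | e ∈ s}

lemma exists_isMaximalPathList_of_mem {s : Set (Sym2 V)} (hs : s ∈ maximalPathEdgeSets G) :
    ∃ a b l, IsMaximalPathList G a b l ∧ s = listEdges l := by
  obtain ⟨a, b, p, hp, rfl⟩ := hs
  exact ⟨a, b, p.support, hp.isMaximalPathList, setOf_mem_edges_eq_listEdges p⟩

lemma exists_isMaximalPathList_append_of_mem {u v : V} {s : Set (Sym2 V)}
    (hs : s ∈ maximalPathEdgeSets G) (huv : s(u, v) ∈ s) : ∃ a b h t,
      IsMaximalPathList G a b (h ++ u :: v :: t) ∧ s = listEdges (h ++ u :: v :: t) := by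
  obtain ⟨a, b, l, hl, rfl⟩ := exists_isMaximalPathList_of_mem hs
  obtain ⟨x, y, hxy, h, t, rfl⟩ := huv
  rcases Sym2.eq_iff.mp hxy with ⟨rfl, rfl⟩ | ⟨rfl, rfl⟩
  · exact ⟨a, b, h, t, by simpa using hl, by simp⟩
  · exact ⟨b, a, t.reverse, h.reverse, by simpa using hl.reverse,
      by rw [← listEdges_reverse]; simp⟩

theorem ncard_maximalPathsThrough_le_two [Finite V] (G : SimpleGraph V) (u v : V) :
    (maximalPathsThrough G s(u, v)).ncard ≤ 2 := by
  by_contra! hlt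
  obtain ⟨_, ⟨hs₁, hu₁⟩, _, ⟨hs₂, hu₂⟩, _, ⟨hs₃, hu₃⟩, h₁₂, h₁₃, h₂₃⟩ :=
    (Set.two_lt_ncard (Set.toFinite _)).mp hlt
  obtain ⟨a₁, b₁, h₁, t₁, m₁, rfl⟩ := exists_isMaximalPathList_append_of_mem hs₁ hu₁
  obtain ⟨a₂, b₂, h₂, t₂, m₂, rfl⟩ := exists_isMaximalPathList_append_of_mem hs₂ hu₂
  obtain ⟨a₃, b₃, h₃, t₃, m₃, rfl⟩ := exists_isMaximalPathList_append_of_mem hs₃ hu₃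
  -- among three paths ordered by how far back they reach, the middle one would end in degree two
  -- at both ends
  rcases m₁.exists_eq_append_cons_or m₂ h₁₂ with r₁₂ | r₂₁ <;>
  rcases m₁.exists_eq_append_cons_or m₃ h₁₃ with r₁₃ | r₃₁ <;>
  rcases m₂.exists_eq_append_cons_or m₃ h₂₃ with r₂₃ | r₃₂
  all_goals first
    | exact m₁.false_of_eq_append_cons m₂ m₃ r₁₂ r₂₃
    | exact m₁.false_of_eq_append_cons m₃ m₂ r₁₃ r₃₂
    | exact m₂.false_of_eq_append_cons m₁ m₃ r₂₁ r₁₃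
    | exact m₂.false_of_eq_append_cons m₃ m₁ r₂₃ r₃₁
    | exact m₃.false_of_eq_append_cons m₁ m₂ r₃₁ r₁₂
    | exact m₃.false_of_eq_append_cons m₂ m₁ r₃₂ r₂₁

lemma maximalPathsThrough_subset_maximalPathsFrom {u v : V} (hu : deg G u ≠ 2) :
    maximalPathsThrough G s(u, v) ⊆ maximalPathsFrom G u v := by
  rintro s ⟨hs, huv⟩
  obtain ⟨a, b, h, t, m, rfl⟩ := exists_isMaximalPathList_append_of_mem hs huv
  obtain rfl | ⟨h, p, rfl⟩ := h.eq_nil_or_concat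
  · obtain rfl : a = u := by simpa using m.head?_eq.symm
    exact ⟨b, t, m, rfl⟩
  · exact (hu (m.deg_eq_two (p := p) (w := u) (y := v) ⟨h, t, by simp⟩)).elim

end Counting

lemma isMaximalPath_transfer {G H : SimpleGraph V} (hHG : H ≤ G) {a b : V} {p : G.Walk a b}
    (hp : IsMaximalPath G p) (hE : ∀ e ∈ p.edges, e ∈ H.edgeSet)
    (hdeg : ∀ w ∈ p.support, deg H w ≠ deg G w → (w = a ∨ w = b) ∧ 3 ≤ deg H w) :
    IsMaximalPath H (p.transfer H hE) := by
  obtain ⟨hpath, hlen, hinner, hends, hclosA, hclosB⟩ := hp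
  have ha : deg H a = deg G a ∨ 3 ≤ deg H a := by
    by_cases h : deg H a = deg G a
    · exact Or.inl h
    · exact Or.inr (hdeg a p.start_mem_support h).2
  have hb : deg H b = deg G b ∨ 3 ≤ deg H b := by
    by_cases h : deg H b = deg G b
    · exact Or.inl h
    · exact Or.inr (hdeg b p.end_mem_support h).2
  refine ⟨hpath.transfer hE, by rwa [Walk.length_transfer], ?_, ?_, ?_, ?_⟩
  · intro w hw hwa hwb
    rw [Walk.support_transfer] at hw
    by_contra hw2
    rcases (hdeg w hw (by rw [hinner w hw hwa hwb]; exact hw2)).1 with rfl | rfl <;>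
      contradiction
  · rcases ha with ha | ha <;> rcases hb with hb | hb <;> omega
  · intro h2 x hx
    rw [Walk.support_transfer]
    exact hclosA (by omega) x (hHG hx)
  · intro h2 x hx
    rw [Walk.support_transfer]
    exact hclosB (by omega) x (hHG hx)

section EdgeInsertion

variable {H : SimpleGraph V} {u v : V}

lemma deg_sup_edge_of_ne {w : V} (hu : w ≠ u) (hv : w ≠ v) : deg (H ⊔ edge u v) w = deg H w := by
  have : (H ⊔ edge u v).neighborSet w = H.neighborSet w := by
    ext x
    simp [edge_adj, hu, hv]
  rw [deg, this, deg]

lemma deg_sup_edge_left [Finite V] (hne : u ≠ v) (hnadj : ¬H.Adj u v) :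
    deg (H ⊔ edge u v) u = deg H u + 1 := by
  have : (H ⊔ edge u v).neighborSet u = insert v (H.neighborSet u) := by
    ext x
    by_cases hx : x = v <;> simp [hx, edge_adj, hne]
  rw [deg, this, Set.ncard_insert_of_notMem (show v ∉ H.neighborSet u from hnadj), deg]

lemma sup_edge_adj_of_mk_eq (hne : u ≠ v) {x y : V} (h : s(x, y) = s(u, v)) :
    (H ⊔ edge u v).Adj x y := by
  refine Or.inr ((adj_edge u v).mpr ⟨h.symm, ?_⟩)
  rintro rfl
  rcases Sym2.eq_iff.mp h with ⟨rfl, rfl⟩ | ⟨rfl, rfl⟩ <;> exact hne rfl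

lemma adj_of_sup_edge_adj {x y : V} (h : (H ⊔ edge u v).Adj x y) (hxy : s(x, y) ≠ s(u, v)) :
    H.Adj x y := by
  refine h.resolve_right fun h' => hxy ?_
  rcases (edge_adj _ _ _ _).mp h' with ⟨⟨rfl, rfl⟩ | ⟨rfl, rfl⟩, -⟩
  · rfl
  · exact Sym2.eq_swap

def lowDegreeStarts (G H : SimpleGraph V) (w : V) : Set (Set (Sym2 V)) :=
  {s | deg H w ≤ 2 ∧ ∃ x, H.Adj w x ∧ s ∈ maximalPathsFrom G w x}

lemma mem_lowDegreeStarts_of_notMem (hne : u ≠ v) {s : Set (Sym2 V)}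
    (hs : s ∈ maximalPathEdgeSets (H ⊔ edge u v)) (hsH : s ∉ maximalPathEdgeSets H)
    (huv : s(u, v) ∉ s) :
    s ∈ lowDegreeStarts (H ⊔ edge u v) H u ∪ lowDegreeStarts (H ⊔ edge u v) H v := by
  obtain ⟨a, b, p, hp, rfl⟩ := hs
  have hE : ∀ e ∈ p.edges, e ∈ H.edgeSet := by
    intro e he
    induction e with
    | h x y => exact adj_of_sup_edge_adj (p.adj_of_mem_edges he) (fun h => huv (h ▸ he))
  obtain ⟨w, hw, hdeg, hend⟩ : ∃ w ∈ p.support,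
      deg H w ≠ deg (H ⊔ edge u v) w ∧ ¬((w = a ∨ w = b) ∧ 3 ≤ deg H w) := by
    by_contra! h
    exact hsH ⟨a, b, _, isMaximalPath_transfer le_sup_left hp hE h, by simp [Walk.edges_transfer]⟩
  have hwuv : w ∈ ({u, v} : Set V) := by
    by_contra! h
    simp only [Set.mem_insert_iff, Set.mem_singleton_iff, not_or] at h
    exact hdeg (deg_sup_edge_of_ne h.1 h.2).symm
  obtain ⟨z, hz⟩ : ∃ z, s(w, z) = s(u, v) := by
    rcases hwuv with rfl | rfl
    · exact ⟨v, rfl⟩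
    · exact ⟨u, Sym2.eq_swap⟩
  have hm := hp.isMaximalPathList
  rw [setOf_mem_edges_eq_listEdges] at huv ⊢
  have hab := hm.eq_or_eq_of_adj_of_notMem hw (sup_edge_adj_of_mk_eq hne hz) (hz ▸ huv)
  obtain ⟨b', x, t, hm', hl⟩ := hm.exists_eq_cons_cons_of_eq_or_eq hab
  have hwx : H.Adj w x := by
    refine adj_of_sup_edge_adj (hm'.adj ⟨[], t, rfl⟩) fun h => huv ?_
    rw [← h, ← hl]
    exact ⟨w, x, rfl, [], t, rfl⟩
  have hstart : listEdges p.support ∈ lowDegreeStarts (H ⊔ edge u v) H w :=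
    ⟨le_of_not_gt fun h3 => hend ⟨hab, h3⟩, x, hwx, b', t, hm', hl.symm⟩
  rcases hwuv with rfl | rfl
  · exact Or.inl hstart
  · exact Or.inr hstart

lemma maximalPathEdgeSets_sup_edge_subset (hne : u ≠ v) :
    maximalPathEdgeSets (H ⊔ edge u v) ⊆ maximalPathEdgeSets H ∪
      maximalPathsThrough (H ⊔ edge u v) s(u, v) ∪ lowDegreeStarts (H ⊔ edge u v) H u ∪
        lowDegreeStarts (H ⊔ edge u v) H v := by
  intro s hs
  by_cases hsH : s ∈ maximalPathEdgeSets H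
  · exact Or.inl (Or.inl (Or.inl hsH))
  by_cases huv : s(u, v) ∈ s
  · exact Or.inl (Or.inl (Or.inr ⟨hs, huv⟩))
  rcases mem_lowDegreeStarts_of_notMem hne hs hsH huv with hu | hv
  · exact Or.inl (Or.inr hu)
  · exact Or.inr hv

lemma ncard_lowDegreeStarts_le [Finite V] (G H : SimpleGraph V) (w : V) :
    (lowDegreeStarts G H w).ncard ≤ min (deg H w) 2 := by
  by_cases hw : deg H w ≤ 2
  · calc _ ≤ (⋃ x ∈ H.neighborSet w, maximalPathsFrom G w x).ncard :=
          Set.ncard_le_ncard (by rintro s ⟨-, x, hx, hs⟩; exact Set.mem_biUnion hx hs)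
      _ ≤ deg H w :=
          Set.ncard_biUnion_le_of_subsingleton (Set.toFinite _) (maximalPathsFrom_subsingleton G w)
      _ = min (deg H w) 2 := (min_eq_left hw).symm
  · simp [lowDegreeStarts, hw]

/-- Either `u` gets degree two, and then it had a single edge in `H`, or every maximal path
through the new edge starts at `u`. -/
lemma ncard_maximalPathsThrough_add_ncard_lowDegreeStarts_le [Finite V] (hne : u ≠ v)
    (hnadj : ¬H.Adj u v) :
    (maximalPathsThrough (H ⊔ edge u v) s(u, v)).ncard +
      (lowDegreeStarts (H ⊔ edge u v) H u).ncard ≤ 3 := by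
  have hstarts := ncard_lowDegreeStarts_le (H ⊔ edge u v) H u
  by_cases hu : deg H u = 1
  · have := ncard_maximalPathsThrough_le_two (H ⊔ edge u v) u v
    omega
  · have hu' : deg (H ⊔ edge u v) u ≠ 2 := by
      rw [deg_sup_edge_left hne hnadj]
      omega
    have := (Set.ncard_le_one (Set.toFinite _)).mpr ((maximalPathsFrom_subsingleton _ u v).anti
      (maximalPathsThrough_subset_maximalPathsFrom hu'))
    omega

end EdgeInsertion

end MaximalPaths

open MaximalPaths

/-- Inserting one new edge into a graph increases the number of maximal paths by at most
five. -/
theorem maximalPath_count_insert_edge {V : Type*} [Fintype V] (H : SimpleGraph V)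
    (u v : V) (hne : u ≠ v) (hnadj : ¬ H.Adj u v) :
    (maximalPathEdgeSets (H ⊔ SimpleGraph.fromEdgeSet {s(u, v)})).ncard ≤
      (maximalPathEdgeSets H).ncard + 5 := by
  change (maximalPathEdgeSets (H ⊔ SimpleGraph.edge u v)).ncard ≤ _
  have hTSu := ncard_maximalPathsThrough_add_ncard_lowDegreeStarts_le hne hnadj
  have hSv := ncard_lowDegreeStarts_le (H ⊔ SimpleGraph.edge u v) H v
  calc _ ≤ _ := Set.ncard_le_ncard (maximalPathEdgeSets_sup_edge_subset hne)
    _ ≤ _ := Set.ncard_union_le _ _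
    _ ≤ _ := Nat.add_le_add_right (Set.ncard_union_le _ _) _
    _ ≤ _ := Nat.add_le_add_right (Nat.add_le_add_right (Set.ncard_union_le _ _) _) _
    _ ≤ _ := by omega
end

section
/- Let G = (V,E) be a simple graph with minimum degree at least two and let X ⊆ E with |X| = k be a feedback edge set of G, so that the forest F = G − X is acyclic. Then F has at most 2k vertices of degree at most one, and consequently F has at most 2k vertices of degree at least three. -/
open SimpleGraph Finset

section ForestLemma

variable {V : Type*}

private lemma my_concat_isPath {G : SimpleGraph V} {u v w : V} {p : G.Walk u v}
    (hp : p.IsPath) (h : G.Adj v w) (hw : w ∉ p.support) : (p.concat h).IsPath := by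
  rw [← SimpleGraph.Walk.isPath_reverse_iff, SimpleGraph.Walk.reverse_concat]
  exact hp.reverse.cons (by simpa using hw)

/-- In an acyclic graph, adjacent vertices have different distances from a common
reachable vertex. -/
private lemma dist_ne_of_adj {G : SimpleGraph V} (hG : G.IsAcyclic) {r u v : V}
    (hru : G.Reachable r u) (hrv : G.Reachable r v) (huv : G.Adj u v) :
    G.dist r u ≠ G.dist r v := by
  classical
  intro heq
  obtain ⟨p, hp⟩ := hru.exists_walk_length_eq_dist
  obtain ⟨q, hq⟩ := hrv.exists_walk_length_eq_dist
  have hpp : p.IsPath := p.isPath_of_length_eq_dist hp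
  have hqp : q.IsPath := q.isPath_of_length_eq_dist hq
  by_cases hu : u ∈ q.support
  · -- takeUntil gives a path from r to u of length q.length, forcing u = v
    have htp : (q.takeUntil u hu).IsPath := hqp.takeUntil hu
    have h1 : G.dist r u ≤ (q.takeUntil u hu).length := SimpleGraph.dist_le _
    have h2 : (q.takeUntil u hu).length + (q.dropUntil u hu).length = q.length := by
      rw [← SimpleGraph.Walk.length_append, SimpleGraph.Walk.take_spec]
    have h3 : (q.dropUntil u hu).length = 0 := by omega
    exact huv.ne (SimpleGraph.Walk.eq_of_length_eq_zero h3)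
  · have hw : (q.concat huv.symm).IsPath := my_concat_isPath hqp huv.symm hu
    have := hG.path_unique ⟨p, hpp⟩ ⟨q.concat huv.symm, hw⟩
    have hlen : p.length = (q.concat huv.symm).length :=
      congrArg SimpleGraph.Walk.length (congrArg Subtype.val this)
    rw [SimpleGraph.Walk.length_concat] at hlen
    omega

private lemma forest_card [Fintype V] [Nonempty V] (F : SimpleGraph V) [DecidableRel F.Adj]
    (hF : F.IsAcyclic) : F.edgeFinset.card + 1 ≤ Fintype.card V := by
  classical
  set r : V → V := fun v => (F.connectedComponentMk v).out with hr
  have hreach : ∀ v, F.Reachable (r v) v := fun v => by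
    have : F.connectedComponentMk ((F.connectedComponentMk v).out) = F.connectedComponentMk v :=
      (F.connectedComponentMk v).out_eq
    exact (SimpleGraph.ConnectedComponent.eq.mp this)
  set d : V → ℕ := fun v => F.dist (r v) v with hd
  have hradj : ∀ {u v : V}, F.Adj u v → r u = r v := by
    intro u v huv
    simp only [hr, SimpleGraph.ConnectedComponent.connectedComponentMk_eq_of_adj huv]
  -- adjacent vertices have distance differing by exactly one
  have key : ∀ {u v : V}, F.Adj u v → d u + 1 = d v ∨ d v + 1 = d u := by
    intro u v huv
    have hne : d u ≠ d v := by
      have := dist_ne_of_adj hF (r := r u) (hreach u) (hradj huv ▸ hreach v) huv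
      simpa [hd, hradj huv] using this
    have h1 : d v ≤ d u + 1 := by
      obtain ⟨p, hp⟩ := (hreach u).exists_walk_length_eq_dist
      have h := SimpleGraph.dist_le (p.concat huv)
      rw [SimpleGraph.Walk.length_concat, hp] at h
      simp only [hd]
      rw [← hradj huv]
      exact h
    have h2 : d u ≤ d v + 1 := by
      obtain ⟨p, hp⟩ := (hreach v).exists_walk_length_eq_dist
      have h := SimpleGraph.dist_le (p.concat huv.symm)
      rw [SimpleGraph.Walk.length_concat, hp] at h
      simp only [hd]
      rw [hradj huv]
      exact h
    omega
  -- the "deeper endpoint" map on edges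
  have hP : ∀ e ∈ F.edgeFinset, ∃ p : V × V, e = s(p.1, p.2) ∧ F.Adj p.1 p.2 ∧ d p.2 = d p.1 + 1 := by
    intro e he
    rw [SimpleGraph.mem_edgeFinset] at he
    induction e with
    | _ a b =>
      have hab : F.Adj a b := he
      rcases key hab with h | h
      · exact ⟨(a, b), rfl, hab, h.symm⟩
      · exact ⟨(b, a), Sym2.eq_swap, hab.symm, h.symm⟩
  set f : Sym2 V → V := fun e =>
    if h : ∃ p : V × V, e = s(p.1, p.2) ∧ F.Adj p.1 p.2 ∧ d p.2 = d p.1 + 1 then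
      (Classical.choose h).2 else Classical.arbitrary V with hf
  have hfspec : ∀ e ∈ F.edgeFinset, ∃ u, e = s(u, f e) ∧ F.Adj u (f e) ∧ d (f e) = d u + 1 := by
    intro e he
    have h := hP e he
    rw [hf]
    simp only [dif_pos h]
    obtain ⟨h1, h2, h3⟩ := Classical.choose_spec h
    exact ⟨(Classical.choose h).1, h1, h2, h3⟩
  -- injectivity on edges
  have hinj : Set.InjOn f ↑F.edgeFinset := by
    intro e1 he1 e2 he2 hfe
    obtain ⟨u1, he1', ha1, hd1⟩ := hfspec e1 he1
    obtain ⟨u2, he2', ha2, hd2⟩ := hfspec e2 he2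
    set v := f e1 with hv
    rw [← hfe] at he2' ha2 hd2
    by_cases huu : u1 = u2
    · rw [he1', he2', huu]
    · exfalso
      -- build two shortest paths from r v to v through u1 and u2
      have hru1 : r u1 = r v := hradj ha1
      have hru2 : r u2 = r v := hradj ha2
      have hre1 : F.Reachable (r v) u1 := hru1 ▸ hreach u1
      have hre2 : F.Reachable (r v) u2 := hru2 ▸ hreach u2
      obtain ⟨p1, hp1⟩ := hre1.exists_walk_length_eq_dist
      obtain ⟨p2, hp2⟩ := hre2.exists_walk_length_eq_dist
      have hdu1 : F.dist (r v) u1 = d u1 := by simp only [hd]; rw [hru1]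
      have hdu2 : F.dist (r v) u2 = d u2 := by simp only [hd]; rw [hru2]
      have hdv : F.dist (r v) v = d v := rfl
      have hl1 : (p1.concat ha1).length = F.dist (r v) v := by
        rw [SimpleGraph.Walk.length_concat, hp1, hdu1, hdv]; omega
      have hl2 : (p2.concat ha2).length = F.dist (r v) v := by
        rw [SimpleGraph.Walk.length_concat, hp2, hdu2, hdv]; omega
      have hpath1 := SimpleGraph.Walk.isPath_of_length_eq_dist _ hl1
      have hpath2 := SimpleGraph.Walk.isPath_of_length_eq_dist _ hl2
      have := hF.path_unique ⟨_, hpath1⟩ ⟨_, hpath2⟩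
      have this : p1.concat ha1 = p2.concat ha2 := congrArg Subtype.val this
      obtain ⟨h2, -⟩ := SimpleGraph.Walk.concat_inj this
      exact huu h2
  -- the root of an arbitrary vertex is not in the image
  have hv0 : ∃ v0 : V, ∀ e ∈ F.edgeFinset, f e ≠ v0 := by
    refine ⟨r (Classical.arbitrary V), fun e he hcon => ?_⟩
    obtain ⟨u, -, -, hdv⟩ := hfspec e he
    have hroot : d (f e) = 0 := by
      rw [hcon]
      have : r (r (Classical.arbitrary V)) = r (Classical.arbitrary V) := by
        simp only [hr]
        exact congrArg Quot.out (Quot.out_eq _)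
      simp only [hd, this, SimpleGraph.dist_self]
    omega
  obtain ⟨v0, hv0⟩ := hv0
  have himg : F.edgeFinset.image f ⊆ Finset.univ.erase v0 := by
    intro v hv
    rw [Finset.mem_image] at hv
    obtain ⟨e, he, rfl⟩ := hv
    exact Finset.mem_erase.mpr ⟨hv0 e he, Finset.mem_univ _⟩
  have h1 : F.edgeFinset.card = (F.edgeFinset.image f).card :=
    (Finset.card_image_of_injOn hinj).symm
  have h2 : (F.edgeFinset.image f).card ≤ Fintype.card V - 1 := by
    have := Finset.card_le_card himg
    rwa [Finset.card_erase_of_mem (Finset.mem_univ _), Finset.card_univ] at this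
  have h3 : 1 ≤ Fintype.card V := Fintype.card_pos
  omega

end ForestLemma

/-- If G has minimum degree at least two and X is a feedback edge set of size k, then the
forest F = G − X has at most 2k vertices of degree at most one, and consequently at most
2k vertices of degree at least three. -/
theorem forest_few_leaves_and_branch_vertices {V : Type*} [Fintype V]
    (G : SimpleGraph V) (hmin : ∀ w : V, 2 ≤ deg G w) (k : ℕ)
    (X : Finset (Sym2 V)) (hXsub : ↑X ⊆ G.edgeSet) (hXcard : X.card = k)
    (hforest : (G.deleteEdges ↑X).IsAcyclic) :
    {w : V | deg (G.deleteEdges ↑X) w ≤ 1}.ncard ≤ 2 * k ∧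
    {w : V | 3 ≤ deg (G.deleteEdges ↑X) w}.ncard ≤ 2 * k := by
  classical
  rcases isEmpty_or_nonempty V with hV | hV
  · constructor <;> simp [Set.eq_empty_of_isEmpty]
  set F := G.deleteEdges ↑X with hFdef
  have hdegF : ∀ w, deg F w = F.degree w := fun w => by
    rw [deg, Set.ncard_eq_toFinset_card']; rfl
  have hdegG : ∀ w, deg G w = G.degree w := fun w => by
    rw [deg, Set.ncard_eq_toFinset_card']; rfl
  have hle : F ≤ G := SimpleGraph.deleteEdges_le _
  have hdegle : ∀ w, F.degree w ≤ G.degree w := fun w =>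
    Finset.card_le_card fun u hu => by
      rw [SimpleGraph.mem_neighborFinset] at hu ⊢
      exact hle hu
  have hminG : ∀ w, 2 ≤ G.degree w := fun w => (hdegG w) ▸ hmin w
  -- edge counts
  have hXsubF : X ⊆ G.edgeFinset := fun e he => SimpleGraph.mem_edgeFinset.mpr (hXsub he)
  have hEF : F.edgeFinset = G.edgeFinset \ X := G.edgeFinset_deleteEdges X
  have hcard : F.edgeFinset.card + k = G.edgeFinset.card := by
    rw [hEF, Finset.card_sdiff_of_subset hXsubF]
    have := Finset.card_le_card hXsubF
    omega
  have hsumF : ∑ w, F.degree w = 2 * F.edgeFinset.card :=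
    SimpleGraph.sum_degrees_eq_twice_card_edges F
  have hsumG : ∑ w, G.degree w = 2 * G.edgeFinset.card :=
    SimpleGraph.sum_degrees_eq_twice_card_edges G
  have hsum : ∑ w, F.degree w + 2 * k = ∑ w, G.degree w := by omega
  set c : V → ℕ := fun w => 2 - F.degree w with hc
  have hpoint : ∀ w, F.degree w + c w ≤ G.degree w := fun w => by
    have h1 := hdegle w
    have h2 := hminG w
    simp only [hc]
    omega
  have hsumc : ∑ w, c w ≤ 2 * k := by
    have h := Finset.sum_le_sum (fun w (_ : w ∈ Finset.univ) => hpoint w)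
    rw [Finset.sum_add_distrib] at h
    omega
  -- set-to-finset conversions
  have hL : {w : V | deg F w ≤ 1}.ncard = (Finset.univ.filter fun w => F.degree w ≤ 1).card := by
    rw [show {w : V | deg F w ≤ 1} = ↑(Finset.univ.filter fun w => F.degree w ≤ 1) by
      ext w; simp [hdegF]]
    exact Set.ncard_coe_finset _
  have hB : {w : V | 3 ≤ deg F w}.ncard = (Finset.univ.filter fun w => 3 ≤ F.degree w).card := by
    rw [show {w : V | 3 ≤ deg F w} = ↑(Finset.univ.filter fun w => 3 ≤ F.degree w) by
      ext w; simp [hdegF]]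
    exact Set.ncard_coe_finset _
  -- part 1
  have hLcard : (Finset.univ.filter fun w => F.degree w ≤ 1).card ≤ ∑ w, c w := by
    rw [Finset.card_eq_sum_ones]
    calc ∑ _w ∈ Finset.univ.filter (fun w => F.degree w ≤ 1), 1
        ≤ ∑ w ∈ Finset.univ.filter (fun w => F.degree w ≤ 1), c w := by
          apply Finset.sum_le_sum
          intro w hw
          rw [Finset.mem_filter] at hw
          simp only [hc]
          omega
      _ ≤ ∑ w, c w := Finset.sum_le_sum_of_subset (Finset.subset_univ _)
  -- part 2
  have hBcard : (Finset.univ.filter fun w => 3 ≤ F.degree w).card + 2 * Fintype.card V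
      ≤ ∑ w, F.degree w + ∑ w, c w := by
    have h : ∑ w, ((if 3 ≤ F.degree w then 1 else 0) + 2)
        ≤ ∑ w, (F.degree w + c w) := by
      apply Finset.sum_le_sum
      intro w _
      simp only [hc]
      by_cases h3 : 3 ≤ F.degree w <;> simp [h3] <;> omega
    rw [Finset.sum_add_distrib, Finset.sum_add_distrib, Finset.sum_const, Finset.card_univ,
      smul_eq_mul] at h
    have hind : ∑ w, (if 3 ≤ F.degree w then 1 else 0)
        = (Finset.univ.filter fun w => 3 ≤ F.degree w).card := by
      rw [Finset.card_eq_sum_ones, Finset.sum_filter]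
    omega
  have htree : F.edgeFinset.card + 1 ≤ Fintype.card V := forest_card F hforest
  constructor
  · rw [hL]; omega
  · rw [hB]; omega
end

section
/- Let G be a simple graph with minimum degree at least two in which no connected component is a cycle (equivalently, every connected component contains a vertex of degree at least three). Then every vertex of G lies on some maximal path of G; that is, the maximal paths of G cover all vertices of G. -/
/-!
Grow a path from an edge at `w` greedily: while an end has degree two and a neighbour off the
path, step to that neighbour. By finiteness this stops at each end, at a vertex of degree at
least three or at a degree-two vertex whose neighbours all lie on the path. If both ends
stopped at degree two, the vertex set of the path would be closed under adjacency and consist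
of degree-two vertices only, so the component of `w` would have no vertex of degree three.
-/

open SimpleGraph Walk

section

variable {V : Type*} {G : SimpleGraph V}

lemma exists_adj_of_two_le_deg {w : V} (h : 2 ≤ deg G w) : ∃ x, G.Adj w x :=
  Set.nonempty_of_ncard_ne_zero (s := G.neighborSet w) (by unfold deg at h; omega)

lemma eq_or_eq_of_deg_eq_two {y a b z : V} (hd : deg G y = 2) (ha : G.Adj y a)
    (hb : G.Adj y b) (hab : a ≠ b) (hz : G.Adj y z) : z = a ∨ z = b := by
  have hsub : ({a, b} : Set V) ⊆ G.neighborSet y := Set.insert_subset ha (by simpa using hb)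
  have heq : ({a, b} : Set V) = G.neighborSet y :=
    Set.eq_of_subset_of_ncard_le hsub (by rw [Set.ncard_pair hab]; exact hd.le)
    (Set.finite_of_ncard_pos (by unfold deg at hd; omega))
  have hz' : z ∈ ({a, b} : Set V) := heq ▸ hz
  simpa using hz'

lemma mem_of_reachable_of_adj_closed {S : Set V} (hS : ∀ y ∈ S, ∀ z, G.Adj y z → z ∈ S)
    {u x : V} (hu : u ∈ S) (hr : G.Reachable u x) : x ∈ S := by
  obtain ⟨p⟩ := hr
  induction p with
  | nil => exact hu
  | cons h _ ih => exact ih (hS _ hu _ h)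

namespace SimpleGraph.Walk

lemma IsPath.exists_adj_adj_of_mem_support {u v y : V} {p : G.Walk u v} (hp : p.IsPath)
    (hy : y ∈ p.support) (hyu : y ≠ u) (hyv : y ≠ v) :
    ∃ a b, a ≠ b ∧ G.Adj y a ∧ G.Adj y b ∧ a ∈ p.support ∧ b ∈ p.support := by
  induction p with
  | nil => exact absurd (by simpa using hy) hyu
  | @cons u u' v h q ih =>
    obtain ⟨hq, hu⟩ := (cons_isPath_iff h q).mp hp
    rw [support_cons, List.mem_cons] at hy
    rcases hy with rfl | hy
    · exact absurd rfl hyu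
    by_cases hyu' : y = u'
    · subst hyu'
      cases q with
      | nil => exact absurd rfl hyv
      | cons h' q' =>
        exact ⟨u, _, fun h'' => hu (h'' ▸ by simp), h.symm, h', by simp, by simp⟩
    · obtain ⟨a, b, hab, ha, hb, has, hbs⟩ := ih hq hy hyu' hyv
      exact ⟨a, b, hab, ha, hb, by simp [has], by simp [hbs]⟩

lemma IsPath.adj_mem_support_of_deg_eq_two {u v y z : V} {p : G.Walk u v} (hp : p.IsPath)
    (hy : y ∈ p.support) (hyu : y ≠ u) (hyv : y ≠ v) (hd : deg G y = 2) (hz : G.Adj y z) :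
    z ∈ p.support := by
  obtain ⟨a, b, hab, ha, hb, has, hbs⟩ := hp.exists_adj_adj_of_mem_support hy hyu hyv
  rcases eq_or_eq_of_deg_eq_two hd ha hb hab hz with rfl | rfl
  · exact has
  · exact hbs

def InteriorDegTwo {u v : V} (p : G.Walk u v) : Prop :=
  ∀ w ∈ p.support, w ≠ u → w ≠ v → deg G w = 2

def IsSaturatedAt {u v : V} (p : G.Walk u v) (y : V) : Prop :=
  deg G y = 2 → ∀ x, G.Adj y x → x ∈ p.support

lemma InteriorDegTwo.reverse {u v : V} {p : G.Walk u v} (hp : p.InteriorDegTwo) :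
    p.reverse.InteriorDegTwo :=
  fun w hw hwv hwu => hp w (by simpa using hw) hwu hwv

lemma InteriorDegTwo.concat {u v x : V} {p : G.Walk u v} (hp : p.InteriorDegTwo)
    (hv : deg G v = 2) (h : G.Adj v x) : (p.concat h).InteriorDegTwo := by
  intro w hw hwu hwx
  rw [support_concat, List.mem_append, List.mem_singleton] at hw
  rcases hw with hw | rfl
  · by_cases hwv : w = v
    · exact hwv ▸ hv
    · exact hp w hw hwu hwv
  · exact absurd rfl hwx

lemma IsSaturatedAt.mono {u v u' v' y : V} {p : G.Walk u v} {q : G.Walk u' v'}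
    (hp : p.IsSaturatedAt y) (hpq : p.support ⊆ q.support) : q.IsSaturatedAt y :=
  fun hy x hx => hpq (hp hy x hx)

theorem exists_append_isSaturatedAt [Fintype V] {u v : V} (p : G.Walk u v) (hp : p.IsPath)
    (hi : p.InteriorDegTwo) :
    ∃ (v' : V) (e : G.Walk v v'), (p.append e).IsPath ∧ (p.append e).InteriorDegTwo ∧
      (p.append e).IsSaturatedAt v' := by
  by_cases hsat : p.IsSaturatedAt v
  · exact ⟨v, nil, by simpa using ⟨hp, hi, hsat⟩⟩
  obtain ⟨hv, x, hvx, hx⟩ : deg G v = 2 ∧ ∃ x, G.Adj v x ∧ x ∉ p.support := by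
    simpa [IsSaturatedAt] using hsat
  have hlen : p.length + 1 < Fintype.card V := by simpa using (hp.concat hx hvx).length_lt
  obtain ⟨v', e, he⟩ := exists_append_isSaturatedAt _ (hp.concat hx hvx) (hi.concat hv hvx)
  exact ⟨v', cons hvx e, by simpa [concat_eq_append, ← append_assoc] using he⟩
termination_by Fintype.card V - p.length
decreasing_by simp only [length_concat]; omega

lemma IsPath.deg_eq_two_of_reachable {b c t : V} {r : G.Walk b c} (hr : r.IsPath)
    (hi : r.InteriorDegTwo) (hb : deg G b = 2) (hc : deg G c = 2) (hsb : r.IsSaturatedAt b)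
    (hsc : r.IsSaturatedAt c) (ht : G.Reachable b t) : deg G t = 2 := by
  have hclosed : ∀ y ∈ r.support, ∀ z, G.Adj y z → z ∈ r.support := by
    intro y hy z hz
    by_cases hyb : y = b
    · exact hsb hb z (hyb ▸ hz)
    by_cases hyc : y = c
    · exact hsc hc z (hyc ▸ hz)
    exact hr.adj_mem_support_of_deg_eq_two hy hyb hyc (hi y hy hyb hyc) hz
  have htr : t ∈ r.support := mem_of_reachable_of_adj_closed hclosed r.start_mem_support ht
  by_cases htb : t = b
  · exact htb ▸ hb
  by_cases htc : t = c
  · exact htc ▸ hc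
  exact hi t htr htb htc

end SimpleGraph.Walk

lemma isMaximalPath_of_isSaturatedAt (hmin : ∀ w : V, 2 ≤ deg G w)
    (hnocycle : ∀ w : V, ∃ x : V, G.Reachable w x ∧ 3 ≤ deg G x) {b c : V} {r : G.Walk b c}
    (hr : r.IsPath) (hl : 1 ≤ r.length) (hi : r.InteriorDegTwo) (hsb : r.IsSaturatedAt b)
    (hsc : r.IsSaturatedAt c) : IsMaximalPath G r := by
  have not_both : ¬(deg G b = 2 ∧ deg G c = 2) := fun ⟨hb, hc⟩ => by
    obtain ⟨t, ht, ht3⟩ := hnocycle b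
    have := hr.deg_eq_two_of_reachable hi hb hc hsb hsc ht
    omega
  refine ⟨hr, hl, hi, ?_, hsb, hsc⟩
  have := hmin b
  have := hmin c
  omega

end

/-- In a graph with minimum degree at least two in which every connected component
contains a vertex of degree at least three, every vertex lies on some maximal path. -/
theorem maximalPaths_cover {V : Type*} [Fintype V] (G : SimpleGraph V)
    (hmin : ∀ w : V, 2 ≤ deg G w)
    (hnocycle : ∀ w : V, ∃ x : V, G.Reachable w x ∧ 3 ≤ deg G x) :
    ∀ w : V, ∃ (a b : V) (p : G.Walk a b), IsMaximalPath G p ∧ w ∈ p.support := by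
  intro w
  obtain ⟨x, hwx⟩ := exists_adj_of_two_le_deg (hmin w)
  let p₀ : G.Walk w x := cons hwx nil
  have hi₀ : p₀.InteriorDegTwo := fun y hy hyw hyx => by simp_all [p₀]
  obtain ⟨b, e, hq, hqi, hqs⟩ := exists_append_isSaturatedAt p₀ (by simp [p₀, hwx.ne]) hi₀
  obtain ⟨c, e', hr, hri, hrs⟩ := exists_append_isSaturatedAt _ hq.reverse hqi.reverse
  have hsupp : (p₀.append e).support ⊆ ((p₀.append e).reverse.append e').support :=
    fun y hy => (mem_support_append_iff _ _).mpr
      (Or.inl (by simpa only [support_reverse, List.mem_reverse]))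
  refine ⟨b, c, _, isMaximalPath_of_isSaturatedAt hmin hnocycle hr ?_ hri
    (hqs.mono hsupp) hrs, hsupp (by simp [p₀])⟩
  simp only [length_append, length_reverse, p₀, length_cons, length_nil]
  omega
end
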